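/- arXiv:2006.11573 — 5 statements merged into one kernel-verified Lean document; each statement's English description precedes it below -/
import Mathlib

section
/- For every x ∈ ℝ^d and every minimizer x* of F: (1/n) Σ_{i=1}^n ‖∇f_i(x) − ∇f(x*)‖² ≤ 4 L_max · D_f(x, x*) + 2σ², where σ² = (1/n) Σ_{i=1}^n ‖∇f_i(x*)‖² and L_max = max_{i∈[n]} L_i. (This shows that uniform-sampling SGD gradient estimates g = ∇f_i(x) satisfy the unified variance bound with A = 2L_max, B = C = 0, ρ = 1, D_1 = 2σ², D_2 = 0.) -/
open Finset
open scoped RealInnerProductSpace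

/-!
Cocoercivity of a convex `L`-smooth function, `‖∇f x - ∇f y‖² ≤ 2L D_f(x, y)`, bounds each
`‖∇fᵢ(x) - ∇fᵢ(x*)‖²` by `2 L_max D_{fᵢ}(x, x*)`. Splitting `∇fᵢ(x) - ∇f(x*)` through `∇fᵢ(x*)`
with `‖a + b‖² ≤ 2‖a‖² + 2‖b‖²` and averaging gives the first term, since the mean of the Bregman
divergences is the Bregman divergence of the mean; the rest is the variance of the `∇fᵢ(x*)`,
which is at most their second moment `σ²`.
-/

section Bregman

variable {E : Type*} [NormedAddCommGroup E] [InnerProductSpace ℝ E]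

def bregman (f : E → ℝ) (f' : E → E) (x y : E) : ℝ :=
  f x - f y - ⟪f' y, x - y⟫

variable {f : E → ℝ} {f' : E → E} {L : ℝ}

lemma bregman_nonneg (hconv : ∀ x y, f x + ⟪f' x, y - x⟫ ≤ f y) (x y : E) :
    0 ≤ bregman f f' x y := by
  have := hconv y x
  unfold bregman
  linarith

lemma bregman_le_half_mul_norm_sub_sq
    (hsmooth : ∀ x y, f y ≤ f x + ⟪f' x, y - x⟫ + L / 2 * ‖y - x‖ ^ 2)
    (x y : E) : bregman f f' x y ≤ L / 2 * ‖x - y‖ ^ 2 := by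
  have := hsmooth y x
  unfold bregman
  linarith

/-- Compare `f` at the gradient step `z = x - t (∇f x - ∇f y)`: smoothness bounds `f z` from
above around `x`, convexity bounds it from below around `y`. -/
lemma le_bregman_of_step (hsmooth : ∀ x y, f y ≤ f x + ⟪f' x, y - x⟫ + L / 2 * ‖y - x‖ ^ 2)
    (hconv : ∀ x y, f x + ⟪f' x, y - x⟫ ≤ f y) (x y : E) (t : ℝ) :
    (t - L / 2 * t ^ 2) * ‖f' x - f' y‖ ^ 2 ≤ bregman f f' x y := by
  set v := f' x - f' y
  have hupper := hsmooth x (x - t • v)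
  have hlower := hconv y (x - t • v)
  have hx : x - t • v - x = -(t • v) := by abel
  have hy : x - t • v - y = (x - y) - t • v := by abel
  have hv : ⟪f' x, v⟫ - ⟪f' y, v⟫ = ‖v‖ ^ 2 := by
    rw [← inner_sub_left, real_inner_self_eq_norm_sq]
  rw [hx, inner_neg_right, real_inner_smul_right, norm_neg, norm_smul, mul_pow,
    Real.norm_eq_abs, sq_abs] at hupper
  rw [hy, inner_sub_right, real_inner_smul_right] at hlower
  have htv : t * ⟪f' x, v⟫ - t * ⟪f' y, v⟫ = t * ‖v‖ ^ 2 := by rw [← mul_sub, hv]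
  unfold bregman
  linarith

theorem norm_sq_grad_sub_le_two_mul_bregman
    (hsmooth : ∀ x y, f y ≤ f x + ⟪f' x, y - x⟫ + L / 2 * ‖y - x‖ ^ 2)
    (hconv : ∀ x y, f x + ⟪f' x, y - x⟫ ≤ f y) (x y : E) :
    ‖f' x - f' y‖ ^ 2 ≤ 2 * L * bregman f f' x y := by
  rcases lt_or_ge 0 L with hL | hL
  · have := le_bregman_of_step hsmooth hconv x y L⁻¹
    have hstep : L⁻¹ - L / 2 * L⁻¹ ^ 2 = (2 * L)⁻¹ := by field_simp; ring
    rw [hstep, ← div_eq_inv_mul, div_le_iff₀ (by positivity)] at this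
    linarith
  · -- For `L ≤ 0` the Bregman divergence vanishes and the unit step forces `∇f x = ∇f y`.
    have hzero : bregman f f' x y = 0 :=
      le_antisymm ((bregman_le_half_mul_norm_sub_sq hsmooth x y).trans
        (mul_nonpos_of_nonpos_of_nonneg (by linarith) (sq_nonneg _))) (bregman_nonneg hconv x y)
    have := le_bregman_of_step hsmooth hconv x y 1
    rw [hzero] at this ⊢
    nlinarith [sq_nonneg ‖f' x - f' y‖]

lemma mul_sum_bregman {ι : Type*} (s : Finset ι) (f : ι → E → ℝ) (f' : ι → E → E) (a : ℝ)
    (x y : E) :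
    a * ∑ i ∈ s, bregman (f i) (f' i) x y
      = bregman (fun z ↦ a * ∑ i ∈ s, f i z) (fun z ↦ a • ∑ i ∈ s, f' i z) x y := by
  simp only [bregman, sum_sub_distrib, real_inner_smul_left, sum_inner]
  ring

end Bregman

lemma norm_sub_sq_le_two_mul {E : Type*} [SeminormedAddCommGroup E] (a b c : E) :
    ‖a - c‖ ^ 2 ≤ 2 * (‖a - b‖ ^ 2 + ‖b - c‖ ^ 2) :=
  (pow_le_pow_left₀ (norm_nonneg _) (norm_sub_le_norm_sub_add_norm_sub a b c) 2).trans add_sq_le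

lemma sum_norm_sub_average_sq {ι E : Type*} [Fintype ι] [NormedAddCommGroup E]
    [InnerProductSpace ℝ E] (g : ι → E) :
    ∑ i, ‖g i - (Fintype.card ι : ℝ)⁻¹ • ∑ j, g j‖ ^ 2
      = ∑ i, ‖g i‖ ^ 2 - (Fintype.card ι : ℝ)⁻¹ * ‖∑ j, g j‖ ^ 2 := by
  set N : ℝ := (Fintype.card ι : ℝ)
  simp only [norm_sub_sq_real, sum_add_distrib, sum_sub_distrib, ← mul_sum, ← sum_inner,
    real_inner_smul_right, real_inner_self_eq_norm_sq, norm_smul, sum_const, card_univ,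
    nsmul_eq_mul, mul_pow, Real.norm_eq_abs, sq_abs]
  by_cases hN : N = 0
  · simp [hN]
  · field_simp
    ring

lemma sum_norm_sub_average_sq_le {ι E : Type*} [Fintype ι] [NormedAddCommGroup E]
    [InnerProductSpace ℝ E] (g : ι → E) :
    ∑ i, ‖g i - (Fintype.card ι : ℝ)⁻¹ • ∑ j, g j‖ ^ 2 ≤ ∑ i, ‖g i‖ ^ 2 := by
  rw [sum_norm_sub_average_sq]
  have : 0 ≤ (Fintype.card ι : ℝ)⁻¹ * ‖∑ j, g j‖ ^ 2 := by positivity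
  linarith

theorem stmt_3_general
    {d n : ℕ} (hn : 0 < n)
    (f : Fin n → EuclideanSpace ℝ (Fin d) → ℝ)
    (f' : Fin n → EuclideanSpace ℝ (Fin d) → EuclideanSpace ℝ (Fin d))
    (Li : Fin n → ℝ)
    (hsmooth : ∀ i x y, f i y ≤ f i x + ⟪f' i x, y - x⟫ + Li i / 2 * ‖y - x‖ ^ 2)
    (hconv : ∀ i x y, f i x + ⟪f' i x, y - x⟫ ≤ f i y)
    (xstar : EuclideanSpace ℝ (Fin d))
    (x : EuclideanSpace ℝ (Fin d)) :
    (n : ℝ)⁻¹ * ∑ i, ‖f' i x - (n : ℝ)⁻¹ • ∑ j, f' j xstar‖ ^ 2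
    ≤ 4 * (Finset.univ.sup' ⟨⟨0, hn⟩, Finset.mem_univ _⟩ Li)
        * ((n : ℝ)⁻¹ * ∑ i, f i x - (n : ℝ)⁻¹ * ∑ i, f i xstar
          - ⟪(n : ℝ)⁻¹ • ∑ j, f' j xstar, x - xstar⟫)
      + 2 * ((n : ℝ)⁻¹ * ∑ i, ‖f' i xstar‖ ^ 2) := by
  set c := (n : ℝ)⁻¹ • ∑ j, f' j xstar
  set L := Finset.univ.sup' ⟨⟨0, hn⟩, Finset.mem_univ _⟩ Li
  have hterm : ∀ i, ‖f' i x - c‖ ^ 2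
      ≤ 4 * L * bregman (f i) (f' i) x xstar + 2 * ‖f' i xstar - c‖ ^ 2 := fun i ↦ by
    have hcoco := norm_sq_grad_sub_le_two_mul_bregman (hsmooth i) (hconv i) x xstar
    have hLi : Li i * bregman (f i) (f' i) x xstar ≤ L * bregman (f i) (f' i) x xstar :=
      mul_le_mul_of_nonneg_right (le_sup' Li (mem_univ i)) (bregman_nonneg (hconv i) x xstar)
    linarith [norm_sub_sq_le_two_mul (f' i x) (f' i xstar) c]
  have hvar : ∑ i, ‖f' i xstar - c‖ ^ 2 ≤ ∑ i, ‖f' i xstar‖ ^ 2 := by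
    simpa using sum_norm_sub_average_sq_le (fun i ↦ f' i xstar)
  calc (n : ℝ)⁻¹ * ∑ i, ‖f' i x - c‖ ^ 2
      ≤ (n : ℝ)⁻¹ * ∑ i, (4 * L * bregman (f i) (f' i) x xstar + 2 * ‖f' i xstar - c‖ ^ 2) :=
        mul_le_mul_of_nonneg_left (sum_le_sum fun i _ ↦ hterm i) (by positivity)
    _ = 4 * L * ((n : ℝ)⁻¹ * ∑ i, bregman (f i) (f' i) x xstar)
        + 2 * ((n : ℝ)⁻¹ * ∑ i, ‖f' i xstar - c‖ ^ 2) := by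
        rw [sum_add_distrib, ← mul_sum, ← mul_sum]; ring
    _ ≤ _ := by
        rw [mul_sum_bregman]
        exact add_le_add le_rfl (by gcongr)

/-- Lemma 1: for uniform-sampling SGD on a finite sum, for every `x` and any
minimizer `x*` of `F = f + R`,
`(1/n) Σᵢ ‖∇fᵢ(x) − ∇f(x*)‖² ≤ 4 L_max D_f(x, x*) + 2σ²` where
`σ² = (1/n) Σᵢ ‖∇fᵢ(x*)‖²` and `L_max = maxᵢ Lᵢ`. -/
theorem stmt_3
    {d n : ℕ} (hn : 0 < n)
    (f : Fin n → EuclideanSpace ℝ (Fin d) → ℝ)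
    (f' : Fin n → EuclideanSpace ℝ (Fin d) → EuclideanSpace ℝ (Fin d))
    (Li : Fin n → ℝ)
    (hsmooth : ∀ i x y, f i y ≤ f i x + ⟪f' i x, y - x⟫ + Li i / 2 * ‖y - x‖ ^ 2)
    (hconv : ∀ i x y, f i x + ⟪f' i x, y - x⟫ ≤ f i y)
    (R : EuclideanSpace ℝ (Fin d) → ℝ) (hR : ConvexOn ℝ Set.univ R)
    (xstar : EuclideanSpace ℝ (Fin d))
    (hmin : ∀ y, (n : ℝ)⁻¹ * ∑ i, f i xstar + R xstar ≤ (n : ℝ)⁻¹ * ∑ i, f i y + R y)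
    (x : EuclideanSpace ℝ (Fin d)) :
    (n : ℝ)⁻¹ * ∑ i, ‖f' i x - (n : ℝ)⁻¹ • ∑ j, f' j xstar‖ ^ 2
    ≤ 4 * (Finset.univ.sup' ⟨⟨0, hn⟩, Finset.mem_univ _⟩ Li)
        * ((n : ℝ)⁻¹ * ∑ i, f i x - (n : ℝ)⁻¹ * ∑ i, f i xstar
          - ⟪(n : ℝ)⁻¹ • ∑ j, f' j xstar, x - xstar⟫)
      + 2 * ((n : ℝ)⁻¹ * ∑ i, ‖f' i xstar‖ ^ 2) :=
  stmt_3_general hn f f' Li hsmooth hconv xstar x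
end

section
/- Let (γ_k) be a decreasing, strictly positive sequence with 0 < γ_0 < 1/(4 L_max). Then the proximal SGD iterates satisfy, for every t ≥ 1, E[F(x̄_t) − F(x*)] ≤ ( ‖x_0 − x*‖² + 2γ_0 (F(x_0) − F(x*)) + 4σ² Σ_{k=0}^{t−1} γ_k² ) / ( 2 Σ_{i=0}^{t−1} (1 − 4 γ_i L_max) γ_i ), where σ² = (1/n) Σ_{i=1}^n ‖∇f_i(x*)‖² and x̄_t = Σ_{k=0}^{t−1} w_k x_k with weights w_k = (1 − 4γ_k L_max) γ_k / Σ_{i=0}^{t−1} (1 − 4γ_i L_max) γ_i. -/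
/-!
A proximal step satisfies the three-point inequality of the prox. Combined with convexity of `fᵢ`
at the current point and `L`-smoothness of the average `f`, it bounds
`‖x_{k+1} - x*‖² + 2γ_k (F x_{k+1} - F x*)` by `‖x_k - x*‖²` plus
`2γ_k² ‖∇f(x_k) - ∇f_{i_k}(x_k)‖²`.
Averaged over `i_k`, this variance is at most the second moment of the stochastic gradient, which
cocoercivity of the `∇fᵢ` and the optimality condition `-∇f(x*) ∈ ∂R(x*)` bound by
`4L (F x_k - F x*) + 2σ²`. Telescoping with `γ_{k+1} ≤ γ_k` and Jensen's inequality for the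
weighted average give the bound.

No conditional expectations are needed: `x_k` is a deterministic function of `i_0, …, i_{k-1}`,
whose joint law is uniform on `Fin k → Fin n`, so `E[φ(x_k)]` is a finite average over index
histories, and the tower property is the splitting of such an average along the last index.
-/

open MeasureTheory ProbabilityTheory Finset Filter Topology Set
open scoped RealInnerProductSpace BigOperators ENNReal

lemma le_of_forall_mem_Ioo_le_add_mul {a b c : ℝ} (h : ∀ t ∈ Ioo (0 : ℝ) 1, a ≤ b + t * c) :
    a ≤ b := by
  have hlim : Tendsto (fun t : ℝ => b + t * c) (𝓝[>] 0) (𝓝 (b + 0 * c)) :=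
    tendsto_const_nhds.add ((tendsto_nhdsWithin_of_tendsto_nhds tendsto_id).mul tendsto_const_nhds)
  rw [zero_mul, add_zero] at hlim
  exact ge_of_tendsto hlim (eventually_of_mem (Ioo_mem_nhdsGT one_pos) h)

section Convex

variable {E : Type*} [NormedAddCommGroup E] [InnerProductSpace ℝ E]

/-- First-order optimality condition for a minimiser of `R + q`, where `q` has a quadratic upper
model of slope `D` along the segment to `u`. -/
lemma ConvexOn.le_add_of_isMin_add {R q : E → ℝ} (hR : ConvexOn ℝ univ R) {x u : E} {D C : ℝ}
    (hmin : ∀ z, R x + q x ≤ R z + q z)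
    (hq : ∀ t ∈ Ioo (0 : ℝ) 1, q (x + t • (u - x)) ≤ q x + t * D + t ^ 2 * C) :
    R x ≤ R u + D := by
  refine le_of_forall_mem_Ioo_le_add_mul (c := C) fun t ht => ?_
  have hseg : x + t • (u - x) = (1 - t) • x + t • u := by module
  have hRt : R (x + t • (u - x)) ≤ (1 - t) * R x + t * R u := by
    rw [hseg]
    exact hR.2 (mem_univ x) (mem_univ u) (by linarith [ht.2]) ht.1.le (by ring)
  have key : t * R x ≤ t * (R u + D + t * C) := by
    nlinarith [hmin (x + t • (u - x)), hq t ht]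
  exact le_of_mul_le_mul_left key ht.1

lemma prox_three_point {R : E → ℝ} (hR : ConvexOn ℝ univ R) {γ : ℝ} (hγ : 0 < γ) {p y : E}
    (hp : ∀ u, γ * R p + ‖p - y‖ ^ 2 / 2 ≤ γ * R u + ‖u - y‖ ^ 2 / 2) (u : E) :
    γ * R p + ‖p - y‖ ^ 2 / 2 + ‖u - p‖ ^ 2 / 2 ≤ γ * R u + ‖u - y‖ ^ 2 / 2 := by
  have hvar : γ * R p ≤ γ * R u + ⟪p - y, u - p⟫ := by
    refine (hR.smul hγ.le).le_add_of_isMin_add (q := fun z => ‖z - y‖ ^ 2 / 2)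
      (C := ‖u - p‖ ^ 2 / 2) hp fun t _ => le_of_eq ?_
    rw [show p + t • (u - p) - y = (p - y) + t • (u - p) by abel, norm_add_sq_real,
      real_inner_smul_right, norm_smul, mul_pow, Real.norm_eq_abs, sq_abs]
    ring
  rw [show u - y = (u - p) + (p - y) by abel, norm_add_sq_real, real_inner_comm]
  linarith

lemma ConvexOn.le_add_inner_of_isMin_add {f R : E → ℝ} (hR : ConvexOn ℝ univ R) {x v : E} {L : ℝ}
    (hsmooth : ∀ y, f y ≤ f x + ⟪v, y - x⟫ + L / 2 * ‖y - x‖ ^ 2)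
    (hmin : ∀ y, f x + R x ≤ f y + R y) (u : E) :
    R x ≤ R u + ⟪v, u - x⟫ := by
  refine hR.le_add_of_isMin_add (q := f) (C := L / 2 * ‖u - x‖ ^ 2)
    (fun z => by linarith [hmin z]) fun t _ => ?_
  have h := hsmooth (x + t • (u - x))
  rw [add_sub_cancel_left, real_inner_smul_right, norm_smul, mul_pow, Real.norm_eq_abs,
    sq_abs] at h
  linarith

lemma norm_sub_sq_le_of_smooth_of_convex {f : E → ℝ} {g : E → E} {L : ℝ} (hL : 0 < L)
    (hsmooth : ∀ x y, f y ≤ f x + ⟪g x, y - x⟫ + L / 2 * ‖y - x‖ ^ 2)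
    (hconv : ∀ x y, f x + ⟪g x, y - x⟫ ≤ f y) (x y : E) :
    ‖g y - g x‖ ^ 2 ≤ 2 * L * (f y - f x - ⟪g x, y - x⟫) := by
  -- test both inequalities at the gradient step `z = y - L⁻¹ (g y - g x)` from `y`
  set w := g y - g x
  have hup := hsmooth y (y - L⁻¹ • w)
  have hlow := hconv x (y - L⁻¹ • w)
  rw [sub_sub_cancel_left, inner_neg_right, real_inner_smul_right, norm_neg, norm_smul, mul_pow,
    Real.norm_eq_abs, sq_abs] at hup
  rw [sub_right_comm, inner_sub_right, real_inner_smul_right] at hlow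
  have hw : ⟪g y, w⟫ - ⟪g x, w⟫ = ‖w‖ ^ 2 := by
    rw [← inner_sub_left, real_inner_self_eq_norm_sq]
  have key : L⁻¹ * ‖w‖ ^ 2 ≤ 2 * (f y - f x - ⟪g x, y - x⟫) := by
    have hsq : L / 2 * (L⁻¹ ^ 2 * ‖w‖ ^ 2) = L⁻¹ * ‖w‖ ^ 2 / 2 := by field_simp
    have hw' := congrArg (L⁻¹ * ·) hw
    simp only [mul_sub] at hw'
    linarith
  calc ‖w‖ ^ 2 = L * (L⁻¹ * ‖w‖ ^ 2) := by field_simp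
    _ ≤ L * (2 * (f y - f x - ⟪g x, y - x⟫)) := by gcongr
    _ = 2 * L * (f y - f x - ⟪g x, y - x⟫) := by ring

lemma convexOn_univ_of_le_add_inner {f : E → ℝ} {g : E → E}
    (hconv : ∀ x y, f x + ⟪g x, y - x⟫ ≤ f y) : ConvexOn ℝ univ f := by
  refine ⟨convex_univ, fun x _ y _ a b ha hb hab => ?_⟩
  set z := a • x + b • y
  have hx := hconv z x
  have hy := hconv z y
  have hzero : a * ⟪g z, x - z⟫ + b * ⟪g z, y - z⟫ = 0 := by
    rw [← real_inner_smul_right, ← real_inner_smul_right, ← inner_add_right]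
    convert inner_zero_right (g z) using 2
    rw [smul_sub, smul_sub, sub_add_sub_comm, ← add_smul, hab, one_smul]
    exact sub_self _
  have hfz : f z = a * f z + b * f z := by rw [← add_mul, hab, one_mul]
  simp only [smul_eq_mul]
  nlinarith [mul_le_mul_of_nonneg_left hx ha, mul_le_mul_of_nonneg_left hy hb]

lemma prox_step_le {fi fb R : E → ℝ} {γ L : ℝ} (hγ : 0 < γ) (hγL : γ * L ≤ 1 / 4)
    {y xstar p v w : E}
    (hconv : fi y + ⟪v, xstar - y⟫ ≤ fi xstar)
    (hsmooth : fb p ≤ fb y + ⟪w, p - y⟫ + L / 2 * ‖p - y‖ ^ 2)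
    (hprox : γ * R p + ‖p - (y - γ • v)‖ ^ 2 / 2 + ‖xstar - p‖ ^ 2 / 2
      ≤ γ * R xstar + ‖xstar - (y - γ • v)‖ ^ 2 / 2) :
    ‖p - xstar‖ ^ 2 + 2 * γ * ((fb p + R p) - (fb xstar + R xstar))
      ≤ ‖y - xstar‖ ^ 2 + 2 * γ * (fb y - fi y) + 2 * γ * (fi xstar - fb xstar)
        + 2 * γ ^ 2 * ‖w - v‖ ^ 2 := by
  rw [show p - (y - γ • v) = (p - y) + γ • v by abel,
    show xstar - (y - γ • v) = (xstar - y) + γ • v by abel, norm_add_sq_real, norm_add_sq_real,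
    real_inner_smul_right, real_inner_smul_right, real_inner_comm v, real_inner_comm v] at hprox
  have hyoung : 2 * γ * ⟪w - v, p - y⟫ ≤ 2 * γ ^ 2 * ‖w - v‖ ^ 2 + ‖p - y‖ ^ 2 / 2 := by
    have := norm_sub_sq_real ((2 * γ) • (w - v)) (p - y)
    rw [real_inner_smul_left, norm_smul, mul_pow, Real.norm_eq_abs, sq_abs] at this
    nlinarith [sq_nonneg ‖(2 * γ) • (w - v) - (p - y)‖]
  have hLp : γ * L * ‖p - y‖ ^ 2 ≤ 1 / 4 * ‖p - y‖ ^ 2 := by gcongr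
  rw [inner_sub_left] at hyoung
  rw [norm_sub_rev p, norm_sub_rev y]
  nlinarith [mul_le_mul_of_nonneg_left hsmooth (by positivity : (0 : ℝ) ≤ 2 * γ),
    mul_le_mul_of_nonneg_left hconv (by positivity : (0 : ℝ) ≤ 2 * γ)]

end Convex

section FiniteSum

variable {E ι : Type*} [NormedAddCommGroup E] [InnerProductSpace ℝ E] [Fintype ι]

lemma inner_inv_card_smul_sum_left (u : ι → E) (v : E) :
    ⟪(Fintype.card ι : ℝ)⁻¹ • ∑ i, u i, v⟫ = 𝔼 i, ⟪u i, v⟫ := by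
  rw [real_inner_smul_left, sum_inner, Fintype.expect_eq_sum_div_card, inv_mul_eq_div]

lemma expect_add_inner (a : ι → ℝ) (u : ι → E) (v : E) :
    𝔼 i, (a i + ⟪u i, v⟫) = 𝔼 i, a i + ⟪(Fintype.card ι : ℝ)⁻¹ • ∑ i, u i, v⟫ := by
  rw [expect_add_distrib, inner_inv_card_smul_sum_left]

lemma expect_norm_sub_mean_sq [Nonempty ι] (u : ι → E) :
    𝔼 i, ‖(Fintype.card ι : ℝ)⁻¹ • ∑ j, u j - u i‖ ^ 2
      = 𝔼 i, ‖u i‖ ^ 2 - ‖(Fintype.card ι : ℝ)⁻¹ • ∑ j, u j‖ ^ 2 := by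
  set m := (Fintype.card ι : ℝ)⁻¹ • ∑ j, u j
  have hm : 𝔼 i, ⟪u i, m⟫ = ‖m‖ ^ 2 := by
    rw [← inner_inv_card_smul_sum_left, real_inner_self_eq_norm_sq]
  simp only [norm_sub_sq_real, real_inner_comm _ m, expect_add_distrib, expect_sub_distrib,
    ← mul_expect, hm, Fintype.expect_const]
  ring

variable {f : ι → E → ℝ} {g : ι → E → E} {L : ℝ} {R : E → ℝ}

lemma expect_le_add_inner_mean [Nonempty ι]
    (hsmooth : ∀ i x y, f i y ≤ f i x + ⟪g i x, y - x⟫ + L / 2 * ‖y - x‖ ^ 2) (x y : E) :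
    𝔼 i, f i y ≤ 𝔼 i, f i x + ⟪(Fintype.card ι : ℝ)⁻¹ • ∑ i, g i x, y - x⟫
      + L / 2 * ‖y - x‖ ^ 2 := by
  calc 𝔼 i, f i y ≤ 𝔼 i, (f i x + ⟪g i x, y - x⟫ + L / 2 * ‖y - x‖ ^ 2) :=
        expect_le_expect fun i _ => hsmooth i x y
    _ = _ := by rw [expect_add_distrib, expect_add_inner, Fintype.expect_const]

lemma mean_add_inner_le_expect
    (hconv : ∀ i x y, f i x + ⟪g i x, y - x⟫ ≤ f i y) (x y : E) :
    𝔼 i, f i x + ⟪(Fintype.card ι : ℝ)⁻¹ • ∑ i, g i x, y - x⟫ ≤ 𝔼 i, f i y := by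
  rw [← expect_add_inner]
  exact expect_le_expect fun i _ => hconv i x y

noncomputable def compositeObjective (f : ι → E → ℝ) (R : E → ℝ) (z : E) : ℝ :=
  𝔼 i, f i z + R z

lemma convexOn_compositeObjective (hconv : ∀ i x y, f i x + ⟪g i x, y - x⟫ ≤ f i y)
    (hR : ConvexOn ℝ univ R) : ConvexOn ℝ univ (compositeObjective f R) :=
  (convexOn_univ_of_le_add_inner (mean_add_inner_le_expect hconv)).add hR

lemma expect_norm_sq_le [Nonempty ι] (hL : 0 < L)
    (hsmooth : ∀ i x y, f i y ≤ f i x + ⟪g i x, y - x⟫ + L / 2 * ‖y - x‖ ^ 2)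
    (hconv : ∀ i x y, f i x + ⟪g i x, y - x⟫ ≤ f i y) (hR : ConvexOn ℝ univ R) {xstar : E}
    (hmin : ∀ y, compositeObjective f R xstar ≤ compositeObjective f R y) (y : E) :
    𝔼 i, ‖g i y‖ ^ 2 ≤ 4 * L * (compositeObjective f R y - compositeObjective f R xstar)
      + 2 * 𝔼 i, ‖g i xstar‖ ^ 2 := by
  have hopt : R xstar ≤ R y + ⟪(Fintype.card ι : ℝ)⁻¹ • ∑ i, g i xstar, y - xstar⟫ :=
    hR.le_add_inner_of_isMin_add (expect_le_add_inner_mean hsmooth xstar) hmin y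
  have hi : ∀ i, ‖g i y‖ ^ 2
      ≤ 4 * L * (f i y - (f i xstar + ⟪g i xstar, y - xstar⟫)) + 2 * ‖g i xstar‖ ^ 2 := by
    intro i
    have hcoco := norm_sub_sq_le_of_smooth_of_convex hL (hsmooth i) (hconv i) xstar y
    have htri : ‖g i y‖ ≤ ‖g i y - g i xstar‖ + ‖g i xstar‖ := norm_le_norm_sub_add _ _
    nlinarith [add_sq_le (a := ‖g i y - g i xstar‖) (b := ‖g i xstar‖), norm_nonneg (g i y)]
  calc 𝔼 i, ‖g i y‖ ^ 2
      ≤ 𝔼 i, (4 * L * (f i y - (f i xstar + ⟪g i xstar, y - xstar⟫)) + 2 * ‖g i xstar‖ ^ 2) :=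
        expect_le_expect fun i _ => hi i
    _ = 4 * L * (𝔼 i, f i y
          - (𝔼 i, f i xstar + ⟪(Fintype.card ι : ℝ)⁻¹ • ∑ i, g i xstar, y - xstar⟫))
          + 2 * 𝔼 i, ‖g i xstar‖ ^ 2 := by
        rw [expect_add_distrib, ← mul_expect, ← mul_expect, expect_sub_distrib, expect_add_inner]
    _ ≤ _ := by
        unfold compositeObjective
        nlinarith

lemma expect_prox_step_le [Nonempty ι] (hL : 0 < L)
    (hsmooth : ∀ i x y, f i y ≤ f i x + ⟪g i x, y - x⟫ + L / 2 * ‖y - x‖ ^ 2)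
    (hconv : ∀ i x y, f i x + ⟪g i x, y - x⟫ ≤ f i y) (hR : ConvexOn ℝ univ R) {xstar : E}
    (hmin : ∀ y, compositeObjective f R xstar ≤ compositeObjective f R y)
    {γ : ℝ} (hγ : 0 < γ) (hγL : γ * L ≤ 1 / 4) {prox : E → E}
    (hprox : ∀ y u, γ * R (prox y) + ‖prox y - y‖ ^ 2 / 2 ≤ γ * R u + ‖u - y‖ ^ 2 / 2) (y : E) :
    𝔼 i, (‖prox (y - γ • g i y) - xstar‖ ^ 2
        + 2 * γ * (compositeObjective f R (prox (y - γ • g i y)) - compositeObjective f R xstar))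
      ≤ ‖y - xstar‖ ^ 2
        + 8 * γ ^ 2 * L * (compositeObjective f R y - compositeObjective f R xstar)
        + 4 * γ ^ 2 * 𝔼 i, ‖g i xstar‖ ^ 2 := by
  set gbar := (Fintype.card ι : ℝ)⁻¹ • ∑ i, g i y
  have hi : ∀ i, ‖prox (y - γ • g i y) - xstar‖ ^ 2
        + 2 * γ * (compositeObjective f R (prox (y - γ • g i y)) - compositeObjective f R xstar)
      ≤ ‖y - xstar‖ ^ 2 + 2 * γ * (𝔼 j, f j y - f i y) + 2 * γ * (f i xstar - 𝔼 j, f j xstar)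
        + 2 * γ ^ 2 * ‖gbar - g i y‖ ^ 2 := fun i =>
    prox_step_le (fb := fun z => 𝔼 j, f j z) hγ hγL (hconv i y xstar)
      (expect_le_add_inner_mean hsmooth y _) (prox_three_point hR hγ (hprox _) xstar)
  have hvar : 𝔼 i, ‖gbar - g i y‖ ^ 2 ≤ 𝔼 i, ‖g i y‖ ^ 2 := by
    rw [expect_norm_sub_mean_sq]
    linarith [sq_nonneg ‖gbar‖]
  have hgrad := expect_norm_sq_le hL hsmooth hconv hR hmin y
  refine (expect_le_expect fun i _ => hi i).trans ?_
  simp only [expect_add_distrib, ← mul_expect, expect_sub_distrib, Fintype.expect_const, sub_self,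
    mul_zero, add_zero]
  nlinarith [sq_nonneg γ]

end FiniteSum

section History

variable {α E : Type*}

/-- The iterate after the index history `h : Fin k → α`, as a deterministic function of the
indices drawn so far. -/
def iterateAlong (step : ℕ → α → E → E) (x₀ : E) : (k : ℕ) → (Fin k → α) → E
  | 0, _ => x₀
  | k + 1, h => step k (h (Fin.last k)) (iterateAlong step x₀ k (Fin.init h))

variable {step : ℕ → α → E → E} {x₀ : E}

lemma iterateAlong_snoc (k : ℕ) (h : Fin k → α) (i : α) :
    iterateAlong step x₀ (k + 1) (Fin.snoc h i) = step k i (iterateAlong step x₀ k h) := by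
  simp only [iterateAlong, Fin.init_snoc, Fin.snoc_last]

lemma eq_iterateAlong {Ω : Type*} {x : ℕ → Ω → E} {idx : ℕ → Ω → α} (hx₀ : ∀ ω, x 0 ω = x₀)
    (hstep : ∀ k ω, x (k + 1) ω = step k (idx k ω) (x k ω)) (k : ℕ) (ω : Ω) :
    x k ω = iterateAlong step x₀ k (fun j : Fin k => idx j ω) := by
  induction k with
  | zero => exact hx₀ ω
  | succ k ih =>
    rw [hstep, ih]
    rfl

variable [Fintype α]

lemma expect_pi_fin_succ {k : ℕ} (φ : (Fin (k + 1) → α) → ℝ) :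
    𝔼 h, φ h = 𝔼 h : Fin k → α, 𝔼 i, φ (Fin.snoc h i) := by
  rw [expect_comm, ← expect_product', ← Fintype.expect_equiv (Fin.snocEquiv fun _ => α)]
  · rfl
  · intro; rfl

lemma expect_iterateAlong_succ (ψ : E → ℝ) (k : ℕ) :
    𝔼 h, ψ (iterateAlong step x₀ (k + 1) h)
      = 𝔼 h : Fin k → α, 𝔼 i, ψ (step k i (iterateAlong step x₀ k h)) := by
  simp only [expect_pi_fin_succ, iterateAlong_snoc]

end History

section Sampling

variable {Ω α : Type*} [MeasurableSpace Ω] {μ : Measure Ω} [IsProbabilityMeasure μ]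
  [Fintype α] [MeasurableSpace α] [MeasurableSingletonClass α] {idx : ℕ → Ω → α}

lemma map_history_singleton (hmeas : ∀ k, Measurable (idx k))
    (hunif : ∀ k j, μ (idx k ⁻¹' {j}) = (Fintype.card α : ℝ≥0∞)⁻¹) (hindep : iIndepFun idx μ)
    (k : ℕ) (h : Fin k → α) :
    μ.map (fun ω (j : Fin k) => idx j ω) {h} = (Fintype.card α : ℝ≥0∞)⁻¹ ^ k := by
  have hlaw : μ.map (fun ω (j : Fin k) => idx j ω) = Measure.pi fun j : Fin k => μ.map (idx j) :=
    (iIndepFun_iff_map_fun_eq_pi_map (f := fun j : Fin k => idx j)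
      fun j => (hmeas j).aemeasurable).1 (hindep.precomp Fin.val_injective)
  rw [hlaw, Measure.pi_singleton]
  simp only [Measure.map_apply (hmeas _) (measurableSet_singleton _), hunif, prod_const,
    card_univ, Fintype.card_fin]

lemma integrable_comp_history (hmeas : ∀ k, Measurable (idx k)) {k : ℕ} (φ : (Fin k → α) → ℝ) :
    Integrable (fun ω => φ (fun j : Fin k => idx j ω)) μ :=
  Integrable.of_finite.comp_measurable (measurable_pi_lambda _ fun j => hmeas j)

lemma integral_comp_history (hmeas : ∀ k, Measurable (idx k))
    (hunif : ∀ k j, μ (idx k ⁻¹' {j}) = (Fintype.card α : ℝ≥0∞)⁻¹) (hindep : iIndepFun idx μ)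
    {k : ℕ} (φ : (Fin k → α) → ℝ) :
    ∫ ω, φ (fun j : Fin k => idx j ω) ∂μ = 𝔼 h, φ h := by
  have hhist : Measurable fun ω (j : Fin k) => idx j ω := measurable_pi_lambda _ fun j => hmeas j
  rw [← integral_map hhist.aemeasurable (Measurable.of_discrete).aestronglyMeasurable,
    integral_fintype Integrable.of_finite, Fintype.expect_eq_sum_div_card, sum_div]
  refine sum_congr rfl fun h _ => ?_
  rw [measureReal_def, map_history_singleton hmeas hunif hindep, smul_eq_mul, Fintype.card_fun,
    Fintype.card_fin]
  simp [div_eq_inv_mul]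

lemma integral_sub_le_sum_mul_expect {E : Type*} [AddCommGroup E] [Module ℝ E]
    (hmeas : ∀ k, Measurable (idx k))
    (hunif : ∀ k j, μ (idx k ⁻¹' {j}) = (Fintype.card α : ℝ≥0∞)⁻¹) (hindep : iIndepFun idx μ)
    {F : E → ℝ} (hF : ConvexOn ℝ univ F) (c : ℝ) {x : ℕ → Ω → E}
    {X : (k : ℕ) → (Fin k → α) → E} (hx : ∀ k ω, x k ω = X k (fun j : Fin k => idx j ω))
    {w : ℕ → ℝ} {t : ℕ} (hw₀ : ∀ k, 0 ≤ w k) (hw₁ : ∑ k ∈ range t, w k = 1) :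
    ∫ ω, (F (∑ k ∈ range t, w k • x k ω) - c) ∂μ ≤ ∑ k ∈ range t, w k * 𝔼 h, (F (X k h) - c) := by
  have hint (k : ℕ) : Integrable (fun ω => w k * (F (x k ω) - c)) μ := by
    simp_rw [hx]
    exact integrable_comp_history hmeas fun h => w k * (F (X k h) - c)
  -- the averaged iterate depends only on the first `t` indices, hence is integrable
  have havg (ω : Ω) : ∑ k ∈ range t, w k • x k ω
      = ∑ k : Fin t, w k • X k fun j => idx (Fin.castLE k.isLt.le j) ω := by
    simp only [hx, ← Fin.sum_univ_eq_sum_range fun k => w k • X k fun j : Fin k => idx j ω]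
    rfl
  have hjensen (ω : Ω) : F (∑ k ∈ range t, w k • x k ω) - c
      ≤ ∑ k ∈ range t, w k * (F (x k ω) - c) := by
    have := hF.map_sum_le (fun k _ => hw₀ k) hw₁ fun k _ => mem_univ (x k ω)
    simp only [smul_eq_mul] at this
    simp only [mul_sub, sum_sub_distrib, ← sum_mul, hw₁, one_mul]
    linarith
  calc ∫ ω, (F (∑ k ∈ range t, w k • x k ω) - c) ∂μ
      ≤ ∫ ω, ∑ k ∈ range t, w k * (F (x k ω) - c) ∂μ := by
        refine integral_mono ?_ (integrable_finsetSum _ fun k _ => hint k) hjensen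
        simp_rw [havg]
        exact integrable_comp_history hmeas
          fun H : Fin t → α => F (∑ k : Fin t, w k • X k fun j => H (Fin.castLE k.isLt.le j)) - c
    _ = ∑ k ∈ range t, w k * 𝔼 h, (F (X k h) - c) := by
        rw [integral_finsetSum _ fun k _ => hint k]
        refine sum_congr rfl fun k _ => ?_
        simp_rw [hx]
        rw [integral_const_mul, integral_comp_history hmeas hunif hindep fun h => F (X k h) - c]

end Sampling

lemma sum_mul_le_of_recursion {a b γ : ℕ → ℝ} {L σ : ℝ} (ha : ∀ k, 0 ≤ a k) (hb : ∀ k, 0 ≤ b k)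
    (hγ : ∀ k, 0 ≤ γ k) (hγdec : Antitone γ)
    (hrec : ∀ k, a (k + 1) + 2 * γ k * b (k + 1) ≤ a k + 8 * γ k ^ 2 * L * b k + 4 * γ k ^ 2 * σ)
    (t : ℕ) :
    ∑ k ∈ range t, 2 * γ k * (1 - 4 * γ k * L) * b k
      ≤ a 0 + 2 * γ 0 * b 0 + 4 * σ * ∑ k ∈ range t, γ k ^ 2 := by
  suffices h : ∀ t, a t + 2 * γ t * b t + ∑ k ∈ range t, 2 * γ k * (1 - 4 * γ k * L) * b k
      ≤ a 0 + 2 * γ 0 * b 0 + 4 * σ * ∑ k ∈ range t, γ k ^ 2 by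
    nlinarith [h t, ha t, hb t, hγ t]
  intro t
  induction t with
  | zero => simp
  | succ t ih =>
    have hmono : γ (t + 1) * b (t + 1) ≤ γ t * b (t + 1) :=
      mul_le_mul_of_nonneg_right (hγdec t.le_succ) (hb _)
    rw [sum_range_succ, sum_range_succ]
    nlinarith [hrec t]

theorem sum_mul_expect_proxSGD_le {E ι : Type*} [NormedAddCommGroup E] [InnerProductSpace ℝ E]
    [Fintype ι] [Nonempty ι] {f : ι → E → ℝ} {g : ι → E → E} {L : ℝ} {R : E → ℝ} (hL : 0 < L)
    (hsmooth : ∀ i x y, f i y ≤ f i x + ⟪g i x, y - x⟫ + L / 2 * ‖y - x‖ ^ 2)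
    (hconv : ∀ i x y, f i x + ⟪g i x, y - x⟫ ≤ f i y) (hR : ConvexOn ℝ univ R) {xstar : E}
    (hmin : ∀ y, compositeObjective f R xstar ≤ compositeObjective f R y)
    {γ : ℕ → ℝ} (hγ : ∀ k, 0 < γ k) (hγdec : Antitone γ) (hγL : ∀ k, γ k * L ≤ 1 / 4)
    {prox : ℝ → E → E} (hprox : ∀ γ : ℝ, 0 < γ → ∀ y u,
      γ * R (prox γ y) + ‖prox γ y - y‖ ^ 2 / 2 ≤ γ * R u + ‖u - y‖ ^ 2 / 2)
    (x₀ : E) (t : ℕ) :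
    ∑ k ∈ range t, 2 * γ k * (1 - 4 * γ k * L) *
        𝔼 h, (compositeObjective f R
          (iterateAlong (fun k i z => prox (γ k) (z - γ k • g i z)) x₀ k h)
          - compositeObjective f R xstar)
      ≤ ‖x₀ - xstar‖ ^ 2 + 2 * γ 0 * (compositeObjective f R x₀ - compositeObjective f R xstar)
        + 4 * (𝔼 i, ‖g i xstar‖ ^ 2) * ∑ k ∈ range t, γ k ^ 2 := by
  set F := compositeObjective f R
  set X := iterateAlong (fun k i z => prox (γ k) (z - γ k • g i z)) x₀
  have hrec : ∀ k, 𝔼 h, ‖X (k + 1) h - xstar‖ ^ 2 + 2 * γ k * 𝔼 h, (F (X (k + 1) h) - F xstar)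
      ≤ 𝔼 h, ‖X k h - xstar‖ ^ 2 + 8 * γ k ^ 2 * L * 𝔼 h, (F (X k h) - F xstar)
        + 4 * γ k ^ 2 * 𝔼 i, ‖g i xstar‖ ^ 2 := by
    intro k
    have hstep := expect_iterateAlong_succ (step := fun k i z => prox (γ k) (z - γ k • g i z))
      (x₀ := x₀) (fun z => ‖z - xstar‖ ^ 2 + 2 * γ k * (F z - F xstar)) k
    calc _ = 𝔼 h, (‖X (k + 1) h - xstar‖ ^ 2 + 2 * γ k * (F (X (k + 1) h) - F xstar)) := by
          rw [expect_add_distrib, mul_expect]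
      _ = _ := hstep
      _ ≤ 𝔼 h, (‖X k h - xstar‖ ^ 2 + 8 * γ k ^ 2 * L * (F (X k h) - F xstar)
            + 4 * γ k ^ 2 * 𝔼 i, ‖g i xstar‖ ^ 2) := expect_le_expect fun h _ =>
          expect_prox_step_le hL hsmooth hconv hR hmin (hγ k) (hγL k) (hprox _ (hγ k)) (X k h)
      _ = _ := by
          rw [expect_add_distrib, expect_add_distrib, Fintype.expect_const,
            mul_expect _ _ (8 * γ k ^ 2 * L)]
  have hsum := sum_mul_le_of_recursion (a := fun k => 𝔼 h, ‖X k h - xstar‖ ^ 2)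
    (b := fun k => 𝔼 h, (F (X k h) - F xstar))
    (fun k => expect_nonneg fun h _ => sq_nonneg ‖X k h - xstar‖)
    (fun k => expect_nonneg fun h _ => sub_nonneg.2 (hmin (X k h)))
    (fun k => (hγ k).le) hγdec hrec t
  have ha₀ : 𝔼 h, ‖X 0 h - xstar‖ ^ 2 = ‖x₀ - xstar‖ ^ 2 := Fintype.expect_const _
  have hb₀ : 𝔼 h, (F (X 0 h) - F xstar) = F x₀ - F xstar := Fintype.expect_const _
  beta_reduce at hsum
  rwa [ha₀, hb₀] at hsum

lemma pos_and_mul_lt_of_lt_one_div {γ : ℕ → ℝ} {L : ℝ} (hγ₀ : 0 < γ 0) (hγdec : Antitone γ)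
    (h : γ 0 < 1 / (4 * L)) : 0 < L ∧ ∀ k, γ k * L < 1 / 4 := by
  have hL : 0 < L := by
    have := hγ₀.trans h
    rw [one_div, inv_pos] at this
    linarith
  refine ⟨hL, fun k => ?_⟩
  have := (lt_div_iff₀ (by positivity)).1 h
  nlinarith [hγdec k.zero_le]

lemma inv_natCast_mul_sum_eq_expect {n : ℕ} (a : Fin n → ℝ) : (n : ℝ)⁻¹ * ∑ i, a i = 𝔼 i, a i := by
  rw [Fintype.expect_eq_sum_div_card, Fintype.card_fin, inv_mul_eq_div]

/-- Corollary 3: proximal SGD for finite sums with uniform i.i.d. sampling,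
decreasing step sizes `0 < γ₀ < 1/(4 L_max)`, without bounded gradient assumptions. -/
theorem stmt_4
    {d n : ℕ} (hn : 0 < n)
    {Ω : Type*} {m0 : MeasurableSpace Ω} {μ : Measure Ω} [IsProbabilityMeasure μ]
    (f : Fin n → EuclideanSpace ℝ (Fin d) → ℝ)
    (f' : Fin n → EuclideanSpace ℝ (Fin d) → EuclideanSpace ℝ (Fin d))
    (Li : Fin n → ℝ)
    -- each f_i is convex and L_i-smooth
    (hsmooth : ∀ i x y, f i y ≤ f i x + ⟪f' i x, y - x⟫ + Li i / 2 * ‖y - x‖ ^ 2)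
    (hconv : ∀ i x y, f i x + ⟪f' i x, y - x⟫ ≤ f i y)
    -- R is convex, F = (1/n) Σ f_i + R, x* a minimizer of F
    (R : EuclideanSpace ℝ (Fin d) → ℝ) (hR : ConvexOn ℝ Set.univ R)
    (xstar : EuclideanSpace ℝ (Fin d))
    (hmin : ∀ y, (n : ℝ)⁻¹ * ∑ i, f i xstar + R xstar ≤ (n : ℝ)⁻¹ * ∑ i, f i y + R y)
    -- prox_{γ R}
    (prox : ℝ → EuclideanSpace ℝ (Fin d) → EuclideanSpace ℝ (Fin d))
    (hprox : ∀ γ : ℝ, 0 < γ → ∀ y u,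
      γ * R (prox γ y) + ‖prox γ y - y‖ ^ 2 / 2 ≤ γ * R u + ‖u - y‖ ^ 2 / 2)
    -- decreasing, strictly positive step sizes with γ₀ < 1/(4 L_max)
    (γ : ℕ → ℝ) (hγpos : ∀ k, 0 < γ k) (hγdec : Antitone γ)
    (hγ0 : γ 0 < 1 / (4 * Finset.univ.sup' ⟨⟨0, hn⟩, Finset.mem_univ _⟩ Li))
    -- i.i.d. indices uniformly distributed on {1,…,n}
    (idx : ℕ → Ω → Fin n) (hidx_meas : ∀ k, Measurable (idx k))
    (hidx_unif : ∀ k j, μ (idx k ⁻¹' {j}) = (n : ENNReal)⁻¹)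
    (hidx_indep : iIndepFun idx μ)
    -- the proximal SGD iterates
    (x : ℕ → Ω → EuclideanSpace ℝ (Fin d)) (x0 : EuclideanSpace ℝ (Fin d))
    (hx0 : ∀ ω, x 0 ω = x0)
    (hiter : ∀ k ω, x (k + 1) ω = prox (γ k) (x k ω - γ k • f' (idx k ω) (x k ω)))
    (t : ℕ) (ht : 1 ≤ t) :
    ∫ ω, ((fun z => (n : ℝ)⁻¹ * ∑ i, f i z + R z)
        (∑ k ∈ range t,
          ((1 - 4 * γ k * Finset.univ.sup' ⟨⟨0, hn⟩, Finset.mem_univ _⟩ Li) * γ k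
            / ∑ i ∈ range t,
              (1 - 4 * γ i * Finset.univ.sup' ⟨⟨0, hn⟩, Finset.mem_univ _⟩ Li) * γ i) • x k ω)
      - ((n : ℝ)⁻¹ * ∑ i, f i xstar + R xstar)) ∂μ
    ≤ (‖x0 - xstar‖ ^ 2
        + 2 * γ 0 * (((n : ℝ)⁻¹ * ∑ i, f i x0 + R x0) - ((n : ℝ)⁻¹ * ∑ i, f i xstar + R xstar))
        + 4 * ((n : ℝ)⁻¹ * ∑ i, ‖f' i xstar‖ ^ 2) * ∑ k ∈ range t, γ k ^ 2)
      / (2 * ∑ i ∈ range t,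
          (1 - 4 * γ i * Finset.univ.sup' ⟨⟨0, hn⟩, Finset.mem_univ _⟩ Li) * γ i) := by
  have : Nonempty (Fin n) := ⟨⟨0, hn⟩⟩
  set L := univ.sup' ⟨⟨0, hn⟩, mem_univ _⟩ Li
  obtain ⟨hL, hγL⟩ := pos_and_mul_lt_of_lt_one_div (hγpos 0) hγdec hγ0
  have hsmoothL (i : Fin n) (x y : EuclideanSpace ℝ (Fin d)) :
      f i y ≤ f i x + ⟪f' i x, y - x⟫ + L / 2 * ‖y - x‖ ^ 2 :=
    (hsmooth i x y).trans (by gcongr; exact le_sup' Li (mem_univ i))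
  simp only [inv_natCast_mul_sum_eq_expect] at hmin ⊢
  change ∀ y, compositeObjective f R xstar ≤ compositeObjective f R y at hmin
  change ∫ ω, (compositeObjective f R _ - compositeObjective f R xstar) ∂μ
    ≤ (_ + 2 * γ 0 * (compositeObjective f R x0 - compositeObjective f R xstar) + _) / _
  set S := ∑ i ∈ range t, (1 - 4 * γ i * L) * γ i
  have hc (k : ℕ) : 0 < (1 - 4 * γ k * L) * γ k := mul_pos (by linarith [hγL k]) (hγpos k)
  have hS : 0 < S := sum_pos (fun k _ => hc k) (nonempty_range_iff.2 (by omega))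
  have hJ := integral_sub_le_sum_mul_expect hidx_meas (by simpa using hidx_unif) hidx_indep
    (convexOn_compositeObjective hconv hR) (compositeObjective f R xstar)
    (eq_iterateAlong (step := fun k i z => prox (γ k) (z - γ k • f' i z)) hx0 hiter)
    (w := fun k => (1 - 4 * γ k * L) * γ k / S)
    (fun k => div_nonneg (hc k).le hS.le)
    (by rw [← sum_div, div_self hS.ne'])
  have hsum := sum_mul_expect_proxSGD_le hL hsmoothL hconv hR hmin hγpos hγdec
    (fun k => (hγL k).le) hprox x0 t
  refine hJ.trans ?_
  rw [le_div_iff₀ (by positivity), sum_mul]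
  refine le_of_eq_of_le (sum_congr rfl fun k _ => ?_) hsum
  field_simp
end

section
/- Let R ≡ 0, M = B/(2ρ), and suppose D_1 = D_2 = 0. With constant step size γ_k = γ ≤ 1/(4(A+MC)), the iterates x_{k+1} = x_k − γ g_k satisfy, for every k ≥ 1, E[f(x̄_k) − f(x*)] ≤ ( ‖x_0 − x*‖² + 2 M γ² σ_0² ) / ( γ k ), where x̄_k = (1/k) Σ_{j=0}^{k−1} x_j. -/
/-!
Let `a_k = E‖x_k − x*‖²`, `e_k = E[f(x_k) − f(x*)]`, `s_k = E σ_k²`, `G_k = E‖g_k‖²`. Since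
`∇f(x*) = 0`, `D_f(x_k, x*) = f(x_k) − f(x*)`. Expanding the square, unbiasedness and convexity
give `a_{k+1} ≤ a_k − 2γ e_k + γ² G_k`, and the conditional bounds give
`G_k ≤ 2A e_k + B s_k` and `s_{k+1} ≤ (1−ρ) s_k + 2C e_k`. As `s_k` may be negative, it is
bounded by `(1−ρ)^k s_0 + u_k` with `u_0 = 0`, `u_{k+1} = (1−ρ) u_k + 2C e_k`; the step-size
condition then makes `a_k + (γ²B/ρ) u_k + γ Σ_{j<k} e_j − γ²B s_0 Σ_{j<k} (1−ρ)^j`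
nonincreasing. Letting the geometric sum tend to `1/ρ` gives
`γ Σ_{j<k} e_j ≤ a_0 + (γ²B/ρ) s_0`, and Jensen's inequality bounds `E[f(x̄_k) − f(x*)]` by the
average of the `e_j`.
-/

open MeasureTheory Finset Filter
open scoped RealInnerProductSpace

section Convex

variable {E : Type*} [NormedAddCommGroup E] [InnerProductSpace ℝ E] {f : E → ℝ} {f' : E → E}

lemma eq_zero_of_isMin_of_quadratic_upper_bound {x : E} {L : ℝ} (hL : 0 < L)
    (hsmooth : ∀ y, f y ≤ f x + ⟪f' x, y - x⟫ + L / 2 * ‖y - x‖ ^ 2) (hmin : ∀ y, f x ≤ f y) :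
    f' x = 0 := by
  have hdescent := (hmin _).trans (hsmooth (x - L⁻¹ • f' x))
  rw [sub_sub_cancel_left, inner_neg_right, real_inner_smul_right, real_inner_self_eq_norm_sq,
    norm_neg, norm_smul, Real.norm_of_nonneg (inv_nonneg.2 hL.le)] at hdescent
  have : ‖f' x‖ ^ 2 ≤ 0 := by
    field_simp at hdescent
    nlinarith
  simpa using this

lemma map_average_le {ι : Type*} (hconv : ∀ x y, f x + ⟪f' x, y - x⟫ ≤ f y) {s : Finset ι}
    (hs : s.Nonempty) (p : ι → E) :
    f ((#s : ℝ)⁻¹ • ∑ i ∈ s, p i) ≤ (#s : ℝ)⁻¹ * ∑ i ∈ s, f (p i) := by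
  set c := (#s : ℝ)⁻¹ • ∑ i ∈ s, p i
  have hcard : (0 : ℝ) < #s := by exact_mod_cast hs.card_pos
  have hcentered : ∑ i ∈ s, (p i - c) = 0 := by
    rw [sum_sub_distrib, sum_const, ← Nat.cast_smul_eq_nsmul ℝ, smul_smul,
      mul_inv_cancel₀ hcard.ne', one_smul, sub_self]
  have hsupport := sum_le_sum fun i (_ : i ∈ s) ↦ hconv c (p i)
  rw [sum_add_distrib, ← inner_sum, hcentered, inner_zero_right, add_zero, sum_const,
    nsmul_eq_mul] at hsupport
  rwa [le_inv_mul_iff₀ hcard]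

end Convex

def dampedSum (r : ℝ) (v : ℕ → ℝ) : ℕ → ℝ
  | 0 => 0
  | n + 1 => r * dampedSum r v n + v n

lemma dampedSum_nonneg {r : ℝ} {v : ℕ → ℝ} (hr : 0 ≤ r) (hv : ∀ n, 0 ≤ v n) (n : ℕ) :
    0 ≤ dampedSum r v n := by
  induction n with
  | zero => exact le_rfl
  | succ n ih => exact add_nonneg (mul_nonneg hr ih) (hv n)

lemma le_pow_mul_add_dampedSum {r : ℝ} {v s : ℕ → ℝ} (hr : 0 ≤ r)
    (hs : ∀ n, s (n + 1) ≤ r * s n + v n) (n : ℕ) :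
    s n ≤ r ^ n * s 0 + dampedSum r v n := by
  induction n with
  | zero => simp [dampedSum]
  | succ n ih =>
    calc s (n + 1) ≤ r * s n + v n := hs n
      _ ≤ r * (r ^ n * s 0 + dampedSum r v n) + v n := by gcongr
      _ = r ^ (n + 1) * s 0 + dampedSum r v (n + 1) := by rw [dampedSum, pow_succ]; ring

structure SGDRecursion (γ A B C ρ : ℝ) (a e s G : ℕ → ℝ) : Prop where
  dist_succ_le : ∀ n, a (n + 1) ≤ a n - 2 * γ * e n + γ ^ 2 * G n
  grad_sq_le : ∀ n, G n ≤ 2 * A * e n + B * s n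
  noise_succ_le : ∀ n, s (n + 1) ≤ (1 - ρ) * s n + 2 * C * e n

namespace SGDRecursion

variable {γ A B C ρ : ℝ} {a e s G : ℕ → ℝ}

lemma lyapunov_step (h : SGDRecursion γ A B C ρ a e s G) (hγ : 0 ≤ γ) (hB : 0 ≤ B)
    (hρ : 0 < ρ) (hρ1 : ρ ≤ 1) (hstep : 2 * γ * (A + B * C / ρ) ≤ 1) (he : ∀ n, 0 ≤ e n)
    (n : ℕ) :
    a (n + 1) + γ ^ 2 * B / ρ * dampedSum (1 - ρ) (fun j ↦ 2 * C * e j) (n + 1) + γ * e n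
      ≤ a n + γ ^ 2 * B / ρ * dampedSum (1 - ρ) (fun j ↦ 2 * C * e j) n
        + γ ^ 2 * B * ((1 - ρ) ^ n * s 0) := by
  set u := dampedSum (1 - ρ) (fun j ↦ 2 * C * e j)
  have hs : s n ≤ (1 - ρ) ^ n * s 0 + u n :=
    le_pow_mul_add_dampedSum (by linarith) h.noise_succ_le n
  have hu : u (n + 1) = (1 - ρ) * u n + 2 * C * e n := rfl
  have hc : γ ^ 2 * B / ρ * ρ = γ ^ 2 * B := by field_simp
  have hdecrease : 0 ≤ γ * (1 - 2 * γ * (A + B * C / ρ)) * e n :=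
    mul_nonneg (mul_nonneg hγ (by linarith)) (he n)
  rw [hu]
  linear_combination h.dist_succ_le n + γ ^ 2 * h.grad_sq_le n + γ ^ 2 * B * hs + hdecrease
    - u n * hc

lemma lyapunov_sum (h : SGDRecursion γ A B C ρ a e s G) (hγ : 0 ≤ γ) (hB : 0 ≤ B)
    (hρ : 0 < ρ) (hρ1 : ρ ≤ 1) (hstep : 2 * γ * (A + B * C / ρ) ≤ 1) (he : ∀ n, 0 ≤ e n)
    (n : ℕ) :
    a n + γ ^ 2 * B / ρ * dampedSum (1 - ρ) (fun j ↦ 2 * C * e j) n + γ * ∑ j ∈ range n, e j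
      ≤ a 0 + γ ^ 2 * B * s 0 * ∑ j ∈ range n, (1 - ρ) ^ j := by
  induction n with
  | zero => simp [dampedSum]
  | succ n ih =>
    have := h.lyapunov_step hγ hB hρ hρ1 hstep he n
    rw [sum_range_succ, sum_range_succ]
    linarith

theorem mul_sum_le (h : SGDRecursion γ A B C ρ a e s G) (hγ : 0 ≤ γ) (hB : 0 ≤ B)
    (hC : 0 ≤ C) (hρ : 0 < ρ) (hρ1 : ρ ≤ 1) (hstep : 2 * γ * (A + B * C / ρ) ≤ 1)
    (ha : ∀ n, 0 ≤ a n) (he : ∀ n, 0 ≤ e n) (k : ℕ) :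
    γ * ∑ j ∈ range k, e j ≤ a 0 + γ ^ 2 * B / ρ * s 0 := by
  have hgeom : Tendsto (fun n ↦ a 0 + γ ^ 2 * B * s 0 * ∑ j ∈ range n, (1 - ρ) ^ j) atTop
      (nhds (a 0 + γ ^ 2 * B / ρ * s 0)) := by
    have := (hasSum_geometric_of_lt_one (r := 1 - ρ) (by linarith) (by linarith)).tendsto_sum_nat
    convert (this.const_mul (γ ^ 2 * B * s 0)).const_add (a 0) using 2
    rw [sub_sub_cancel]
    ring
  refine ge_of_tendsto hgeom (eventually_atTop.2 ⟨k, fun n hkn ↦ ?_⟩)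
  have hu : 0 ≤ γ ^ 2 * B / ρ * dampedSum (1 - ρ) (fun j ↦ 2 * C * e j) n := by
    refine mul_nonneg (by have := hB; positivity) (dampedSum_nonneg (sub_nonneg.2 hρ1) ?_ n)
    exact fun j ↦ mul_nonneg (mul_nonneg zero_le_two hC) (he j)
  have hsum : γ * ∑ j ∈ range k, e j ≤ γ * ∑ j ∈ range n, e j :=
    mul_le_mul_of_nonneg_left
      (sum_le_sum_of_subset_of_nonneg (range_subset_range.2 hkn) fun j _ _ ↦ he j) hγ
  linarith [h.lyapunov_sum hγ hB hρ hρ1 hstep he n, ha n]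

end SGDRecursion

lemma two_mul_mul_le_one_of_le_one_div {γ A B C ρ : ℝ} (hγ : 0 ≤ γ) (hA : 0 ≤ A)
    (hB : 0 ≤ B) (hC : 0 ≤ C) (hρ : 0 < ρ) (hγA : γ ≤ 1 / (4 * (A + B / (2 * ρ) * C))) :
    2 * γ * (A + B * C / ρ) ≤ 1 := by
  have hstep : γ * (4 * (A + B / (2 * ρ) * C)) ≤ 1 := by
    rcases (show 0 ≤ 4 * (A + B / (2 * ρ) * C) by positivity).eq_or_lt with h | h
    · simp [← h]
    · exact (le_div_iff₀ h).1 hγA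
  linear_combination hstep + 2 * mul_nonneg hγ hA

section Expectation

variable {Ω E : Type*} {m m0 : MeasurableSpace Ω} {μ : Measure Ω}
  [NormedAddCommGroup E] [InnerProductSpace ℝ E]

lemma MeasureTheory.MemLp.integrable_inner {X Y : Ω → E} (hX : MemLp X 2 μ) (hY : MemLp Y 2 μ) :
    Integrable (fun ω ↦ ⟪X ω, Y ω⟫) μ :=
  memLp_one_iff_integrable.1 <| hX.of_bilin (fun u v ↦ ⟪u, v⟫) 1 hY (hX.1.inner hY.1)
    (ae_of_all _ fun ω ↦ by simpa using nnnorm_inner_le_nnnorm (𝕜 := ℝ) (X ω) (Y ω))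

lemma condExp_inner_ae_eq [CompleteSpace E] {X Y Z : Ω → E} (hX : StronglyMeasurable[m] X)
    (hXY : Integrable (fun ω ↦ ⟪X ω, Y ω⟫) μ) (hY : Integrable Y μ) (hYZ : μ[Y | m] =ᵐ[μ] Z) :
    μ[fun ω ↦ ⟪X ω, Y ω⟫ | m] =ᵐ[μ] fun ω ↦ ⟪X ω, Z ω⟫ := by
  filter_upwards [condExp_bilin_of_stronglyMeasurable_left (innerSL ℝ) hX hXY hY, hYZ]
    with ω hpull hω
  rw [← hω]
  exact hpull

lemma integral_le_mul_add_mul_of_condExp_le (hm : m ≤ m0) [SigmaFinite (μ.trim hm)]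
    {X U V : Ω → ℝ} {a b : ℝ} (hX : μ[X | m] ≤ᵐ[μ] fun ω ↦ a * U ω + b * V ω)
    (hU : Integrable U μ) (hV : Integrable V μ) :
    ∫ ω, X ω ∂μ ≤ a * ∫ ω, U ω ∂μ + b * ∫ ω, V ω ∂μ := by
  rw [← integral_condExp hm, ← integral_const_mul, ← integral_const_mul,
    ← integral_add (hU.const_mul a) (hV.const_mul b)]
  exact integral_mono_ae integrable_condExp ((hU.const_mul a).add (hV.const_mul b)) hX

lemma memLp_of_succ_eq_sub_smul {p : ENNReal} {X G : ℕ → Ω → E} {γ : ℝ}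
    (h0 : MemLp (X 0) p μ) (hG : ∀ n, MemLp (G n) p μ)
    (hX : ∀ n ω, X (n + 1) ω = X n ω - γ • G n ω) (n : ℕ) : MemLp (X n) p μ := by
  induction n with
  | zero => exact h0
  | succ n ih =>
    rw [show X (n + 1) = X n - γ • G n from funext (hX n)]
    exact ih.sub ((hG n).const_smul γ)

lemma integral_norm_sub_smul_sub_sq_le [CompleteSpace E] [IsFiniteMeasure μ] (hm : m ≤ m0)
    {f : E → ℝ} {f' : E → E} {z : E} (hconv : ∀ x, f x + ⟪f' x, z - x⟫ ≤ f z)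
    {X G : Ω → E} (hXm : StronglyMeasurable[m] X) (hX : MemLp X 2 μ) (hG : MemLp G 2 μ)
    (hGX : μ[G | m] =ᵐ[μ] fun ω ↦ f' (X ω)) (hfX : Integrable (fun ω ↦ f (X ω)) μ)
    {γ : ℝ} (hγ : 0 ≤ γ) :
    ∫ ω, ‖X ω - γ • G ω - z‖ ^ 2 ∂μ
      ≤ ∫ ω, ‖X ω - z‖ ^ 2 ∂μ - 2 * γ * ∫ ω, (f (X ω) - f z) ∂μ
        + γ ^ 2 * ∫ ω, ‖G ω‖ ^ 2 ∂μ := by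
  have hD : MemLp (fun ω ↦ X ω - z) 2 μ := hX.sub (memLp_const z)
  have hDG := hD.integrable_inner hG
  have hpull := condExp_inner_ae_eq (hXm.sub stronglyMeasurable_const) hDG
    (hG.integrable one_le_two) hGX
  have hcross : ∫ ω, ⟪X ω - z, G ω⟫ ∂μ = ∫ ω, ⟪X ω - z, f' (X ω)⟫ ∂μ :=
    (integral_condExp hm).symm.trans (integral_congr_ae hpull)
  have hgap : ∫ ω, (f (X ω) - f z) ∂μ ≤ ∫ ω, ⟪X ω - z, f' (X ω)⟫ ∂μ := by
    refine integral_mono (hfX.sub (integrable_const _)) (integrable_condExp.congr hpull)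
      fun ω ↦ ?_
    have := hconv (X ω)
    rw [← neg_sub, inner_neg_right, real_inner_comm] at this
    linarith
  have hexpand : ∀ ω, ‖X ω - γ • G ω - z‖ ^ 2
      = ‖X ω - z‖ ^ 2 - 2 * γ * ⟪X ω - z, G ω⟫ + γ ^ 2 * ‖G ω‖ ^ 2 := fun ω ↦ by
    rw [sub_right_comm, norm_sub_sq_real, real_inner_smul_right, norm_smul, mul_pow,
      Real.norm_eq_abs, sq_abs]
    ring
  have hD2 := (memLp_two_iff_integrable_sq_norm hD.1).1 hD
  have hG2 := (memLp_two_iff_integrable_sq_norm hG.1).1 hG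
  simp_rw [hexpand]
  rw [integral_add ?_ (hG2.const_mul _), integral_sub hD2 (hDG.const_mul _),
    integral_const_mul, integral_const_mul, hcross]
  · linarith [mul_le_mul_of_nonneg_left hgap (by positivity : (0 : ℝ) ≤ 2 * γ)]
  · exact hD2.sub (hDG.const_mul _)

lemma integral_map_average_sub_le [IsFiniteMeasure μ] {f : E → ℝ} {f' : E → E} {z : E}
    (hconv : ∀ x y, f x + ⟪f' x, y - x⟫ ≤ f y) (hmin : ∀ y, f z ≤ f y) {X : ℕ → Ω → E}
    (hfX : ∀ j, Integrable (fun ω ↦ f (X j ω)) μ) {k : ℕ} (hk : 1 ≤ k) :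
    ∫ ω, (f ((k : ℝ)⁻¹ • ∑ j ∈ range k, X j ω) - f z) ∂μ
      ≤ (k : ℝ)⁻¹ * ∑ j ∈ range k, ∫ ω, (f (X j ω) - f z) ∂μ := by
  have hk0 : (k : ℝ) ≠ 0 := by positivity
  have hjensen : ∀ ω, f ((k : ℝ)⁻¹ • ∑ j ∈ range k, X j ω) - f z
      ≤ (k : ℝ)⁻¹ * ∑ j ∈ range k, (f (X j ω) - f z) := fun ω ↦ by
    have := map_average_le hconv (s := range k) (nonempty_range_iff.2 (by omega)) fun j ↦ X j ω
    rw [card_range] at this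
    rw [sum_sub_distrib, sum_const, card_range, nsmul_eq_mul, mul_sub, inv_mul_cancel_left₀ hk0]
    linarith
  have hint : ∀ j, Integrable (fun ω ↦ f (X j ω) - f z) μ :=
    fun j ↦ (hfX j).sub (integrable_const (f z))
  rw [← integral_finsetSum _ fun j _ ↦ hint j, ← integral_const_mul]
  exact integral_mono_of_nonneg (ae_of_all _ fun ω ↦ sub_nonneg.2 (hmin _))
    ((integrable_finsetSum _ fun j _ ↦ hint j).const_mul _) (ae_of_all _ hjensen)

end Expectation

theorem stmt_11_general
    {d : ℕ} {Ω : Type*} {m0 : MeasurableSpace Ω} {μ : Measure Ω} [IsProbabilityMeasure μ]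
    (ℱ : MeasureTheory.Filtration ℕ m0)
    (f : EuclideanSpace ℝ (Fin d) → ℝ)
    (f' : EuclideanSpace ℝ (Fin d) → EuclideanSpace ℝ (Fin d))
    (L A B C ρ : ℝ)
    (hL : 0 < L) (hA : 0 ≤ A) (hB : 0 ≤ B) (hC : 0 ≤ C)
    (hρ : 0 < ρ) (hρ1 : ρ ≤ 1)
    (hsmooth : ∀ x y, f y ≤ f x + ⟪f' x, y - x⟫ + L / 2 * ‖y - x‖ ^ 2)
    (hconvf : ∀ x y, f x + ⟪f' x, y - x⟫ ≤ f y)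
    (xstar : EuclideanSpace ℝ (Fin d))
    (hmin : ∀ y, f xstar ≤ f y)
    -- constant step size 0 < γ ≤ 1/(4(A+MC)) with M = B/(2ρ)
    (γ : ℝ) (hγpos : 0 < γ) (hγ : γ ≤ 1 / (4 * (A + B / (2 * ρ) * C)))
    (x g : ℕ → Ω → EuclideanSpace ℝ (Fin d)) (σ2 : ℕ → Ω → ℝ)
    (x0 : EuclideanSpace ℝ (Fin d)) (σ0sq : ℝ)
    (hx0 : ∀ ω, x 0 ω = x0) (hσ0 : ∀ ω, σ2 0 ω = σ0sq)
    (hx_meas : ∀ k, StronglyMeasurable[ℱ k] (x k))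
    (hg_meas : ∀ k, StronglyMeasurable[ℱ (k + 1)] (g k))
    (hg_int : ∀ k, Integrable (fun ω => ‖g k ω‖ ^ 2) μ)
    (hσ_int : ∀ k, Integrable (σ2 k) μ)
    (hf_int : ∀ k, Integrable (fun ω => f (x k ω)) μ)
    (hunbiased : ∀ k, μ[g k | ℱ k] =ᵐ[μ] fun ω => f' (x k ω))
    (hvar : ∀ k, μ[fun ω => ‖g k ω - f' xstar‖ ^ 2 | ℱ k]
      ≤ᵐ[μ] fun ω => 2 * A * (f (x k ω) - f xstar - ⟪f' xstar, x k ω - xstar⟫)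
        + B * σ2 k ω)
    (hnoise : ∀ k, μ[σ2 (k + 1) | ℱ k]
      ≤ᵐ[μ] fun ω => (1 - ρ) * σ2 k ω
        + 2 * C * (f (x k ω) - f xstar - ⟪f' xstar, x k ω - xstar⟫))
    -- the iterates: x_{k+1} = x_k − γ g_k
    (hiter : ∀ k ω, x (k + 1) ω = x k ω - γ • g k ω)
    (k : ℕ) (hk : 1 ≤ k) :
    ∫ ω, (f ((k : ℝ)⁻¹ • ∑ j ∈ range k, x j ω) - f xstar) ∂μ
    ≤ (‖x0 - xstar‖ ^ 2 + 2 * (B / (2 * ρ)) * γ ^ 2 * σ0sq) / (γ * k) := by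
  have hf'0 : f' xstar = 0 := eq_zero_of_isMin_of_quadratic_upper_bound hL (hsmooth xstar) hmin
  have hg2 : ∀ j, MemLp (g j) 2 μ := fun j ↦ (memLp_two_iff_integrable_sq_norm
    ((hg_meas j).mono (ℱ.le _)).aestronglyMeasurable).2 (hg_int j)
  have hx2 : ∀ j, MemLp (x j) 2 μ :=
    memLp_of_succ_eq_sub_smul (by simpa only [funext hx0] using memLp_const x0) hg2 hiter
  have hgap_int : ∀ j, Integrable (fun ω ↦ f (x j ω) - f xstar) μ :=
    fun j ↦ (hf_int j).sub (integrable_const _)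
  simp only [hf'0, inner_zero_left, sub_zero] at hvar hnoise
  have hrec : SGDRecursion γ A B C ρ (fun j ↦ ∫ ω, ‖x j ω - xstar‖ ^ 2 ∂μ)
      (fun j ↦ ∫ ω, (f (x j ω) - f xstar) ∂μ) (fun j ↦ ∫ ω, σ2 j ω ∂μ)
      (fun j ↦ ∫ ω, ‖g j ω‖ ^ 2 ∂μ) := by
    refine ⟨fun j ↦ ?_, fun j ↦ ?_, fun j ↦ ?_⟩
    · simpa only [hiter] using integral_norm_sub_smul_sub_sq_le (ℱ.le j)
        (fun y ↦ hconvf y xstar) (hx_meas j) (hx2 j) (hg2 j) (hunbiased j) (hf_int j) hγpos.le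
    · exact integral_le_mul_add_mul_of_condExp_le (ℱ.le j) (hvar j) (hgap_int j) (hσ_int j)
    · exact integral_le_mul_add_mul_of_condExp_le (ℱ.le j) (hnoise j) (hσ_int j) (hgap_int j)
  have hsum := hrec.mul_sum_le hγpos.le hB hC hρ hρ1
    (two_mul_mul_le_one_of_le_one_div hγpos.le hA hB hC hρ hγ)
    (fun j ↦ integral_nonneg fun ω ↦ sq_nonneg _)
    (fun j ↦ integral_nonneg fun ω ↦ sub_nonneg.2 (hmin _)) k
  simp only [hx0, hσ0, integral_const, probReal_univ, one_smul] at hsum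
  calc _ ≤ (k : ℝ)⁻¹ * ∑ j ∈ range k, ∫ ω, (f (x j ω) - f xstar) ∂μ :=
        integral_map_average_sub_le hconvf hmin hf_int hk
    _ = (γ * ∑ j ∈ range k, ∫ ω, (f (x j ω) - f xstar) ∂μ) / (γ * k) := by
        field_simp
    _ ≤ _ := by
        gcongr
        linear_combination hsum

/-- Proposition 1: smooth case `R ≡ 0`, variance reduced (`D₁ = D₂ = 0`),
constant step size `γ ≤ 1/(4(A+MC))` with `M = B/(2ρ)`; then
`E[f(x̄_k) − f(x*)] ≤ (‖x₀−x*‖² + 2Mγ²σ₀²)/(γ k)`. -/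
theorem stmt_11
    {d : ℕ} {Ω : Type*} {m0 : MeasurableSpace Ω} {μ : Measure Ω} [IsProbabilityMeasure μ]
    (ℱ : MeasureTheory.Filtration ℕ m0)
    (f : EuclideanSpace ℝ (Fin d) → ℝ)
    (f' : EuclideanSpace ℝ (Fin d) → EuclideanSpace ℝ (Fin d))
    (L A B C ρ : ℝ)
    (hL : 0 < L) (hA : 0 ≤ A) (hB : 0 ≤ B) (hC : 0 ≤ C)
    (hρ : 0 < ρ) (hρ1 : ρ ≤ 1)
    (hsmooth : ∀ x y, f y ≤ f x + ⟪f' x, y - x⟫ + L / 2 * ‖y - x‖ ^ 2)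
    (hconvf : ∀ x y, f x + ⟪f' x, y - x⟫ ≤ f y)
    (xstar : EuclideanSpace ℝ (Fin d))
    (hmin : ∀ y, f xstar ≤ f y)
    -- constant step size 0 < γ ≤ 1/(4(A+MC)) with M = B/(2ρ)
    (γ : ℝ) (hγpos : 0 < γ) (hγ : γ ≤ 1 / (4 * (A + B / (2 * ρ) * C)))
    (x g : ℕ → Ω → EuclideanSpace ℝ (Fin d)) (σ2 : ℕ → Ω → ℝ)
    (x0 : EuclideanSpace ℝ (Fin d)) (σ0sq : ℝ)
    (hx0 : ∀ ω, x 0 ω = x0) (hσ0 : ∀ ω, σ2 0 ω = σ0sq)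
    (hx_meas : ∀ k, StronglyMeasurable[ℱ k] (x k))
    (hσ_meas : ∀ k, StronglyMeasurable[ℱ k] (σ2 k))
    (hg_meas : ∀ k, StronglyMeasurable[ℱ (k + 1)] (g k))
    (hg_int : ∀ k, Integrable (fun ω => ‖g k ω‖ ^ 2) μ)
    (hσ_int : ∀ k, Integrable (σ2 k) μ)
    (hf_int : ∀ k, Integrable (fun ω => f (x k ω)) μ)
    (hunbiased : ∀ k, μ[g k | ℱ k] =ᵐ[μ] fun ω => f' (x k ω))
    (hvar : ∀ k, μ[fun ω => ‖g k ω - f' xstar‖ ^ 2 | ℱ k]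
      ≤ᵐ[μ] fun ω => 2 * A * (f (x k ω) - f xstar - ⟪f' xstar, x k ω - xstar⟫)
        + B * σ2 k ω)
    (hnoise : ∀ k, μ[σ2 (k + 1) | ℱ k]
      ≤ᵐ[μ] fun ω => (1 - ρ) * σ2 k ω
        + 2 * C * (f (x k ω) - f xstar - ⟪f' xstar, x k ω - xstar⟫))
    -- the iterates: x_{k+1} = x_k − γ g_k
    (hiter : ∀ k ω, x (k + 1) ω = x k ω - γ • g k ω)
    (k : ℕ) (hk : 1 ≤ k) :
    ∫ ω, (f ((k : ℝ)⁻¹ • ∑ j ∈ range k, x j ω) - f xstar) ∂μ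
    ≤ (‖x0 - xstar‖ ^ 2 + 2 * (B / (2 * ρ)) * γ ^ 2 * σ0sq) / (γ * k) :=
  stmt_11_general ℱ f f' L A B C ρ hL hA hB hC hρ hρ1 hsmooth hconvf xstar hmin γ hγpos hγ x g σ2 x0
    σ0sq hx0 hσ0 hx_meas hg_meas hg_int hσ_int hf_int hunbiased hvar hnoise hiter k hk
end

section
/- The b-SEGA gradient estimator g = (d/b) I_S (∇f(x) − h) + h satisfies, for all x, h ∈ ℝ^d: E[‖g − ∇f(x*)‖²] ≤ (4dL/b) · D_f(x, x*) + 2(d/b − 1) ‖h − ∇f(x*)‖². -/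
/-!
Since `I_S` is an orthogonal projection and a uniformly random `b`-subset contains each coordinate
with probability `b/d`, the average of `I_S` is `(b/d) I`. Writing `a = ∇f(x) − h`,
`e = h − ∇f(x*)` and `κ = d/b`, this gives `E‖κ I_S a + e‖² = κ‖a‖² + 2⟪a, e⟫ + ‖e‖²`.
With `v = a + e = ∇f(x) − ∇f(x*)` and `κ ≥ 1` this is at most `2κ‖v‖² + 2(κ − 1)‖e‖²`,
and `‖v‖² ≤ 2L D_f(x, x*)` for convex `L`-smooth `f` (one gradient step from `x`).
-/

open Finset
open scoped RealInnerProductSpace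

/-- `maskE S a` is the vector `I_S a`: the coordinates of `a` in `S`, zero elsewhere. -/
def maskE {d : ℕ} (S : Finset (Fin d)) (a : EuclideanSpace ℝ (Fin d)) :
    EuclideanSpace ℝ (Fin d) := WithLp.toLp 2 (fun j => if j ∈ S then a j else 0)

theorem Finset.card_mul_card_filter_mem_powersetCard {α : Type*} [Fintype α] [DecidableEq α]
    (a : α) (b : ℕ) :
    Fintype.card α * #{S ∈ (univ : Finset α).powersetCard b | a ∈ S}
      = b * (Fintype.card α).choose b := by
  obtain ⟨n, hn⟩ := Nat.exists_eq_add_one.2 ((Fintype.card_pos_iff (α := α)).2 ⟨a⟩)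
  -- count the complement, then Pascal's rule leaves `n.choose (b - 1)`
  have hnot : {S ∈ (univ : Finset α).powersetCard b | a ∉ S} = (univ.erase a).powersetCard b := by
    ext S
    simp [mem_powersetCard, subset_erase, and_comm]
  have hsplit := card_filter_add_card_filter_not (s := (univ : Finset α).powersetCard b) (a ∈ ·)
  rw [hnot, card_powersetCard, card_powersetCard, card_erase_of_mem (mem_univ a), card_univ,
    hn, Nat.add_sub_cancel] at hsplit
  rw [hn]
  cases b with
  | zero => simp
  | succ m =>
    rw [Nat.choose_succ_succ'] at hsplit
    rw [show #{S ∈ univ.powersetCard (m + 1) | a ∈ S} = n.choose m by omega,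
      Nat.add_one_mul_choose_eq, mul_comm]

section Mask

variable {d : ℕ}

theorem maskE_apply (S : Finset (Fin d)) (a : EuclideanSpace ℝ (Fin d)) (j : Fin d) :
    maskE S a j = if j ∈ S then a j else 0 := rfl

theorem real_inner_maskE_self (S : Finset (Fin d)) (a : EuclideanSpace ℝ (Fin d)) :
    ⟪maskE S a, maskE S a⟫ = ⟪maskE S a, a⟫ := by
  simp only [PiLp.inner_apply, maskE_apply]
  refine sum_congr rfl fun j _ => ?_
  split_ifs <;> simp

theorem smul_sum_maskE_powersetCard (b : ℕ) (a : EuclideanSpace ℝ (Fin d)) :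
    (d : ℝ) • ∑ S ∈ univ.powersetCard b, maskE S a = ((b * d.choose b : ℕ) : ℝ) • a := by
  ext j
  have hcount := card_mul_card_filter_mem_powersetCard j b
  rw [Fintype.card_fin] at hcount
  simp only [PiLp.smul_apply, WithLp.ofLp_sum, Finset.sum_apply, smul_eq_mul, maskE, sum_ite,
    sum_const_zero, sum_const, add_zero, nsmul_eq_mul]
  rw [← mul_assoc, ← Nat.cast_mul, hcount]

theorem norm_smul_maskE_add_sq (c : ℝ) (S : Finset (Fin d)) (a e : EuclideanSpace ℝ (Fin d)) :
    ‖c • maskE S a + e‖ ^ 2 = c ^ 2 * ⟪maskE S a, a⟫ + 2 * c * ⟪maskE S a, e⟫ + ‖e‖ ^ 2 := by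
  rw [norm_add_sq_real, ← real_inner_self_eq_norm_sq (c • _), real_inner_smul_left,
    real_inner_smul_right, real_inner_maskE_self, real_inner_smul_left]
  ring

theorem average_norm_smul_maskE_add_sq {b : ℕ} (hb1 : 1 ≤ b) (hbd : b ≤ d)
    (a e : EuclideanSpace ℝ (Fin d)) :
    ((d.choose b : ℝ))⁻¹ * ∑ S ∈ (univ : Finset (Fin d)).powersetCard b,
        ‖((d : ℝ) / b) • maskE S a + e‖ ^ 2
      = (d : ℝ) / b * ‖a‖ ^ 2 + 2 * ⟪a, e⟫ + ‖e‖ ^ 2 := by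
  have hb : (b : ℝ) ≠ 0 := by positivity
  have hd : (d : ℝ) ≠ 0 := by
    have : 0 < d := hb1.trans hbd
    positivity
  have hC : (d.choose b : ℝ) ≠ 0 := by exact_mod_cast (Nat.choose_pos hbd).ne'
  have hsum : ∑ S ∈ (univ : Finset (Fin d)).powersetCard b, maskE S a
      = ((b * d.choose b : ℕ) / d : ℝ) • a := by
    rw [div_eq_inv_mul, mul_smul, ← smul_sum_maskE_powersetCard, inv_smul_smul₀ hd]
  simp only [norm_smul_maskE_add_sq, sum_add_distrib, ← mul_sum, ← sum_inner, hsum, sum_const,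
    card_powersetCard, card_univ, Fintype.card_fin, nsmul_eq_mul, real_inner_smul_left,
    real_inner_self_eq_norm_sq]
  push_cast
  field_simp

end Mask

section Smooth

variable {E : Type*} [NormedAddCommGroup E] [InnerProductSpace ℝ E]

def bregmanDiv (f : E → ℝ) (f' : E → E) (x y : E) : ℝ := f x - f y - ⟪f' y, x - y⟫

variable {f : E → ℝ} {f' : E → E} {L : ℝ}

theorem mul_norm_sq_sub_le_bregmanDiv
    (hsmooth : ∀ x y, f y ≤ f x + ⟪f' x, y - x⟫ + L / 2 * ‖y - x‖ ^ 2)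
    (hconv : ∀ x y, f x + ⟪f' x, y - x⟫ ≤ f y) (x y : E) (t : ℝ) :
    t * ‖f' x - f' y‖ ^ 2 - L / 2 * t ^ 2 * ‖f' x - f' y‖ ^ 2
      ≤ bregmanDiv f f' x y := by
  set v := f' x - f' y
  have hdesc := hsmooth x (x - t • v)
  have hlow := hconv y (x - t • v)
  have hv : ‖v‖ ^ 2 = ⟪f' x, v⟫ - ⟪f' y, v⟫ := by
    rw [← real_inner_self_eq_norm_sq, inner_sub_left]
  rw [sub_sub_cancel_left, inner_neg_right, real_inner_smul_right, norm_neg, norm_smul,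
    mul_pow, Real.norm_eq_abs, sq_abs] at hdesc
  rw [sub_right_comm, inner_sub_right, real_inner_smul_right] at hlow
  unfold bregmanDiv
  linear_combination hdesc + hlow + t * hv

theorem norm_sub_sq_le_two_mul_bregmanDiv
    (hsmooth : ∀ x y, f y ≤ f x + ⟪f' x, y - x⟫ + L / 2 * ‖y - x‖ ^ 2)
    (hconv : ∀ x y, f x + ⟪f' x, y - x⟫ ≤ f y) (x y : E) :
    ‖f' x - f' y‖ ^ 2 ≤ 2 * L * bregmanDiv f f' x y := by
  have hdescent := mul_norm_sq_sub_le_bregmanDiv hsmooth hconv x y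
  rcases lt_or_ge 0 L with hL | hL
  · have h := hdescent L⁻¹
    field_simp at h
    linarith
  · -- smoothness with `L ≤ 0` caps the (nonnegative) divergence at `0`
    have hD : bregmanDiv f f' x y ≤ 0 := by
      unfold bregmanDiv
      nlinarith [hsmooth y x, sq_nonneg ‖x - y‖]
    nlinarith [hdescent 1, hdescent 0, sq_nonneg ‖f' x - f' y‖]

end Smooth

theorem mul_norm_sub_sq_add_two_inner_add_norm_sq_le {F : Type*} [NormedAddCommGroup F]
    [InnerProductSpace ℝ F]
    {κ : ℝ} (hκ : 1 ≤ κ) (v e : F) :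
    κ * ‖v - e‖ ^ 2 + 2 * ⟪v - e, e⟫ + ‖e‖ ^ 2 ≤ 2 * κ * ‖v‖ ^ 2 + 2 * (κ - 1) * ‖e‖ ^ 2 := by
  have hdiff : 2 * κ * ‖v‖ ^ 2 + 2 * (κ - 1) * ‖e‖ ^ 2
      - (κ * ‖v - e‖ ^ 2 + 2 * ⟪v - e, e⟫ + ‖e‖ ^ 2) = ‖v‖ ^ 2 + (κ - 1) * ‖v + e‖ ^ 2 := by
    rw [norm_sub_sq_real, norm_add_sq_real, inner_sub_left, real_inner_self_eq_norm_sq]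
    ring
  nlinarith [sq_nonneg ‖v‖, sq_nonneg ‖v + e‖]

/-- the `b`-SEGA gradient estimator `g = (d/b) I_S(∇f(x) − h) + h` satisfies
`E[‖g − ∇f(x*)‖²] ≤ (4dL/b) D_f(x, x*) + 2(d/b − 1)‖h − ∇f(x*)‖²`. -/
theorem stmt_17
    {d b : ℕ} (hb1 : 1 ≤ b) (hbd : b ≤ d)
    (f : EuclideanSpace ℝ (Fin d) → ℝ)
    (f' : EuclideanSpace ℝ (Fin d) → EuclideanSpace ℝ (Fin d)) (L : ℝ)
    (hsmooth : ∀ x y, f y ≤ f x + ⟪f' x, y - x⟫ + L / 2 * ‖y - x‖ ^ 2)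
    (hconv : ∀ x y, f x + ⟪f' x, y - x⟫ ≤ f y)
    (xstar : EuclideanSpace ℝ (Fin d))
    (x h : EuclideanSpace ℝ (Fin d)) :
    ((d.choose b : ℝ))⁻¹ * ∑ S ∈ (Finset.univ : Finset (Fin d)).powersetCard b,
        ‖((d : ℝ) / b) • maskE S (f' x - h) + h - f' xstar‖ ^ 2
    ≤ 4 * d * L / b * (f x - f xstar - ⟪f' xstar, x - xstar⟫)
      + 2 * ((d : ℝ) / b - 1) * ‖h - f' xstar‖ ^ 2 := by
  have hκ : 1 ≤ (d : ℝ) / b := by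
    rw [one_le_div (by positivity)]
    exact_mod_cast hbd
  have hsplit : f' x - h = (f' x - f' xstar) - (h - f' xstar) := by abel
  simp only [add_sub_assoc]
  rw [average_norm_smul_maskE_add_sq hb1 hbd, hsplit]
  calc _ ≤ 2 * ((d : ℝ) / b) * ‖f' x - f' xstar‖ ^ 2
          + 2 * ((d : ℝ) / b - 1) * ‖h - f' xstar‖ ^ 2 :=
        mul_norm_sub_sq_add_two_inner_add_norm_sq_le hκ _ _
    _ ≤ _ := by
      rw [show 4 * (d : ℝ) * L / b = 2 * ((d : ℝ) / b) * (2 * L) by ring, mul_assoc _ (2 * L)]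
      gcongr
      exact norm_sub_sq_le_two_mul_bregmanDiv hsmooth hconv x xstar
end

section
/- For every x, y ∈ ℝ^d, letting p be the minimizer of u ↦ γ g(u) + (1/2)‖u − y‖² (i.e. p = prox_{γg}(y)) and x* a minimizer of F = f + g, the following inequality holds: −2γ( F(p) − F(x*) ) ≥ ‖p − x*‖² + 2⟨ p − x*, x − γ∇f(x) − y ⟩ − ‖x* − x‖². -/
/-!
Minimality of `p` along the segment from `p` towards `x*`, together with convexity of `g`, gives
the prox variational inequality `γ (g p - g x*) ≤ ⟪y - p, p - x*⟫` in the limit of short steps.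
The upper quadratic bound for `f` at `x`, evaluated at `p`, and the convexity of `f` at `x`,
evaluated at `x*`, give `f p - f x* ≤ ⟪∇f x, p - x*⟫ + L/2 ‖p - x‖²`, and `γ L ≤ 1`. Adding up
and using `2⟪p - x*, p - x⟫ - ‖p - x‖² = ‖p - x*‖² - ‖x* - x‖²` yields the inequality.
-/

open scoped RealInnerProductSpace

open Filter Topology Set

lemma nonneg_of_forall_add_mul_nonneg {a c : ℝ} (h : ∀ t, 0 < t → t ≤ 1 → 0 ≤ a + t * c) :
    0 ≤ a := by
  have hlim : Tendsto (fun t : ℝ => a + t * c) (𝓝[>] 0) (𝓝 a) := by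
    have hcont : Continuous fun t : ℝ => a + t * c := by fun_prop
    simpa using (hcont.tendsto 0).mono_left nhdsWithin_le_nhds
  exact ge_of_tendsto hlim <| mem_of_superset (Ioc_mem_nhdsGT one_pos) fun t ht => h t ht.1 ht.2

section InnerProductSpace

variable {E : Type*} [NormedAddCommGroup E] [InnerProductSpace ℝ E]

lemma norm_add_smul_sq (v w : E) (t : ℝ) :
    ‖v + t • w‖ ^ 2 = ‖v‖ ^ 2 + 2 * t * ⟪v, w⟫ + t ^ 2 * ‖w‖ ^ 2 := by
  rw [norm_add_sq_real, real_inner_smul_right, norm_smul, mul_pow, Real.norm_eq_abs, sq_abs]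
  ring

theorem ConvexOn.sub_le_inner_of_isMinOn_add_sq {s : Set E} {g : E → ℝ} (hg : ConvexOn ℝ s g)
    {y p u : E} (hmin : IsMinOn (fun v => g v + ‖v - y‖ ^ 2 / 2) s p) (hp : p ∈ s) (hu : u ∈ s) :
    g p - g u ≤ ⟪y - p, p - u⟫ := by
  have hinner : ⟪p - y, u - p⟫ = ⟪y - p, p - u⟫ := by
    rw [← neg_sub y p, ← neg_sub p u, inner_neg_neg]
  suffices ∀ t : ℝ, 0 < t → t ≤ 1 →
      0 ≤ (g u - g p + ⟪y - p, p - u⟫) + t * (‖u - p‖ ^ 2 / 2) by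
    linarith [nonneg_of_forall_add_mul_nonneg this]
  intro t ht ht1
  have hseg : (1 - t) • p + t • u = p + t • (u - p) := by module
  have hconv := hg.2 hp hu (sub_nonneg.2 ht1) ht.le (by ring)
  have hle := hmin (hg.1 hp hu (sub_nonneg.2 ht1) ht.le (by ring))
  simp only [mem_ofPred_eq, hseg, smul_eq_mul] at hconv hle
  rw [show p + t • (u - p) - y = (p - y) + t • (u - p) by abel, norm_add_smul_sq, hinner] at hle
  nlinarith

lemma norm_sub_sq_sub_norm_sub_sq (a b c : E) :
    ‖a - b‖ ^ 2 - ‖b - c‖ ^ 2 = 2 * ⟪a - b, a - c⟫ - ‖a - c‖ ^ 2 := by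
  rw [show b - c = (a - c) - (a - b) by abel, norm_sub_sq_real (a - c), real_inner_comm]
  ring

end InnerProductSpace

theorem stmt_19_general {d : ℕ}
    (f g : EuclideanSpace ℝ (Fin d) → ℝ)
    (f' : EuclideanSpace ℝ (Fin d) → EuclideanSpace ℝ (Fin d)) (L γ : ℝ)
    (hL : 0 < L) (hγ : 0 < γ) (hγL : γ ≤ 1 / L)
    (hsmooth : ∀ x y, f y ≤ f x + ⟪f' x, y - x⟫ + L / 2 * ‖y - x‖ ^ 2)
    (hconvf : ∀ x y, f x + ⟪f' x, y - x⟫ ≤ f y)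
    (hconvg : ConvexOn ℝ Set.univ g)
    (xstar : EuclideanSpace ℝ (Fin d))
    (x y p : EuclideanSpace ℝ (Fin d))
    (hp : ∀ u, γ * g p + ‖p - y‖ ^ 2 / 2 ≤ γ * g u + ‖u - y‖ ^ 2 / 2) :
    ‖p - xstar‖ ^ 2 + 2 * ⟪p - xstar, x - γ • f' x - y⟫ - ‖xstar - x‖ ^ 2
      ≤ -(2 * γ) * ((f p + g p) - (f xstar + g xstar)) := by
  have hprox : γ * g p - γ * g xstar ≤ ⟪y - p, p - xstar⟫ :=
    (hconvg.smul hγ.le).sub_le_inner_of_isMinOn_add_sq (fun u _ => hp u) (mem_univ p)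
      (mem_univ xstar)
  have hf : f p - f xstar ≤ ⟪f' x, p - xstar⟫ + L / 2 * ‖p - x‖ ^ 2 := by
    rw [show p - xstar = (p - x) - (xstar - x) by abel, inner_sub_right]
    linarith [hsmooth x p, hconvf x xstar]
  have hγL_sq : γ * L * ‖p - x‖ ^ 2 ≤ ‖p - x‖ ^ 2 :=
    mul_le_of_le_one_left (sq_nonneg _) ((le_div_iff₀ hL).mp hγL)
  have hinner : ⟪p - xstar, x - γ • f' x - y⟫
      = ⟪p - xstar, p - y⟫ - ⟪p - xstar, p - x⟫ - γ * ⟪f' x, p - xstar⟫ := by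
    rw [show x - γ • f' x - y = (p - y) - (p - x) - γ • f' x by abel, inner_sub_right,
      inner_sub_right, real_inner_smul_right, real_inner_comm (f' x)]
  have hprox_comm : ⟪y - p, p - xstar⟫ = -⟪p - xstar, p - y⟫ := by
    rw [← neg_sub p y, inner_neg_left, real_inner_comm]
  linarith [mul_le_mul_of_nonneg_left hf hγ.le, norm_sub_sq_sub_norm_sub_sq p xstar x]

/-- the proximal descent lemma. If `p = prox_{γ g}(y)` (i.e. `p` minimizes
`u ↦ γ g(u) + ½‖u − y‖²`) and `x*` is a minimizer of `F = f + g`, then for every `x, y`: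
`−2γ(F(p) − F(x*)) ≥ ‖p − x*‖² + 2⟨p − x*, x − γ∇f(x) − y⟩ − ‖x* − x‖²`. -/
theorem stmt_19 {d : ℕ}
    (f g : EuclideanSpace ℝ (Fin d) → ℝ)
    (f' : EuclideanSpace ℝ (Fin d) → EuclideanSpace ℝ (Fin d)) (L γ : ℝ)
    (hL : 0 < L) (hγ : 0 < γ) (hγL : γ ≤ 1 / L)
    (hsmooth : ∀ x y, f y ≤ f x + ⟪f' x, y - x⟫ + L / 2 * ‖y - x‖ ^ 2)
    (hconvf : ∀ x y, f x + ⟪f' x, y - x⟫ ≤ f y)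
    (hconvg : ConvexOn ℝ Set.univ g)
    (xstar : EuclideanSpace ℝ (Fin d))
    (hmin : ∀ y, f xstar + g xstar ≤ f y + g y)
    (x y p : EuclideanSpace ℝ (Fin d))
    (hp : ∀ u, γ * g p + ‖p - y‖ ^ 2 / 2 ≤ γ * g u + ‖u - y‖ ^ 2 / 2) :
    ‖p - xstar‖ ^ 2 + 2 * ⟪p - xstar, x - γ • f' x - y⟫ - ‖xstar - x‖ ^ 2
      ≤ -(2 * γ) * ((f p + g p) - (f xstar + g xstar)) :=
  stmt_19_general f g f' L γ hL hγ hγL hsmooth hconvf hconvg xstar x y p hp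
end
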